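/- arXiv:1409.3818 — 6 statements merged into one kernel-verified Lean document; each statement's English description precedes it below -/
import Mathlib

section
/- Let a > 0, c > 0, ν > 0, ω ∈ ℝ, and λ±(ω) = (a ± √(a² + 4ν(c + iω)))/(2ν) with the principal square root. Then |λ₋(ω)/λ₊(ω)| < 1, Re(λ₊(ω) − λ₋(ω)) ≥ a/ν, and |λ₊(ω)| ≥ a/ν. -/
open Complex

/-- The characteristic root `λ₊(ω)` of `νλ² − aλ − (c+iω) = 0`, with the
principal square root. -/
noncomputable def lamPlus (a c ν ω : ℝ) : ℂ :=
  ((a : ℂ) + ((a : ℂ) ^ 2 + 4 * (ν : ℂ) * ((c : ℂ) + (ω : ℂ) * Complex.I)) ^ (1 / 2 : ℂ)) /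
    (2 * (ν : ℂ))

/-- The characteristic root `λ₋(ω)`. -/
noncomputable def lamMinus (a c ν ω : ℝ) : ℂ :=
  ((a : ℂ) - ((a : ℂ) ^ 2 + 4 * (ν : ℂ) * ((c : ℂ) + (ω : ℂ) * Complex.I)) ^ (1 / 2 : ℂ)) /
    (2 * (ν : ℂ))

/-! The principal square root has real part `√((‖z‖ + Re z)/2) ≥ √(Re z)`, so the root `s` of the
discriminant satisfies `Re s ≥ a`. Then `λ± = (a ± s)/(2ν)` gives all three estimates at once:
`|a + s|² − |a − s|² = 4a Re s > 0`, `λ₊ − λ₋ = s/ν`, and `Re λ₊ = (a + Re s)/(2ν) ≥ a/ν`. -/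

namespace Complex

theorem le_re_cpow_inv_two {z : ℂ} {a : ℝ} (h : a ^ 2 ≤ z.re) :
    a ≤ (z ^ (2⁻¹ : ℂ)).re := by
  rw [cpow_inv_two_re]
  exact Real.le_sqrt_of_sq_le (by linarith [re_le_norm z])

theorem norm_ofReal_sub_lt_norm_ofReal_add {a : ℝ} (ha : 0 < a) {s : ℂ} (hs : 0 < s.re) :
    ‖(a : ℂ) - s‖ < ‖(a : ℂ) + s‖ := by
  rw [← sq_lt_sq₀ (norm_nonneg _) (norm_nonneg _), Complex.sq_norm, Complex.sq_norm,
    normSq_apply, normSq_apply]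
  simp only [sub_re, sub_im, add_re, add_im, ofReal_re, ofReal_im]
  nlinarith [mul_pos ha hs]

end Complex

noncomputable def sqrtDisc (a c ν ω : ℝ) : ℂ :=
  ((a : ℂ) ^ 2 + 4 * (ν : ℂ) * ((c : ℂ) + (ω : ℂ) * Complex.I)) ^ (1 / 2 : ℂ)

section CharacteristicRoots

variable {a c ν : ℝ} (ω : ℝ)

theorem le_re_sqrtDisc (hc : 0 ≤ c) (hν : 0 ≤ ν) : a ≤ (sqrtDisc a c ν ω).re := by
  rw [sqrtDisc, one_div]
  refine le_re_cpow_inv_two ?_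
  have hre : ((a : ℂ) ^ 2 + 4 * ν * (c + ω * I)).re = a ^ 2 + 4 * ν * c := by
    simp [← ofReal_pow]
  rw [hre]
  exact le_add_of_nonneg_right (by positivity)

theorem lamPlus_re : (lamPlus a c ν ω).re = (a + (sqrtDisc a c ν ω).re) / (2 * ν) := by
  rw [lamPlus, ← sqrtDisc, show (2 * ν : ℂ) = ((2 * ν : ℝ) : ℂ) by push_cast; rfl, div_ofReal_re,
    add_re, ofReal_re]

theorem lamPlus_sub_lamMinus :
    lamPlus a c ν ω - lamMinus a c ν ω = sqrtDisc a c ν ω / ν := by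
  rw [lamPlus, lamMinus, ← sqrtDisc, ← sub_div, add_sub_sub_cancel, ← two_mul,
    mul_div_mul_left _ _ two_ne_zero]

theorem lamMinus_div_lamPlus (hν : ν ≠ 0) :
    lamMinus a c ν ω / lamPlus a c ν ω = (a - sqrtDisc a c ν ω) / (a + sqrtDisc a c ν ω) := by
  rw [lamPlus, lamMinus, ← sqrtDisc, div_div_div_cancel_right₀ (by simpa using hν)]

end CharacteristicRoots

/-- Estimates on the characteristic roots: `|λ₋/λ₊| < 1`,
`Re(λ₊ − λ₋) ≥ a/ν` and `|λ₊| ≥ a/ν`. -/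
theorem lam_root_estimates (a c ν ω : ℝ) (ha : 0 < a) (hc : 0 < c) (hν : 0 < ν) :
    ‖lamMinus a c ν ω / lamPlus a c ν ω‖ < 1 ∧
    a / ν ≤ (lamPlus a c ν ω - lamMinus a c ν ω).re ∧
    a / ν ≤ ‖lamPlus a c ν ω‖ := by
  have hs : a ≤ (sqrtDisc a c ν ω).re := le_re_sqrtDisc ω hc.le hν.le
  refine ⟨?_, ?_, ?_⟩
  · have hlt := norm_ofReal_sub_lt_norm_ofReal_add ha (ha.trans_le hs)
    rw [lamMinus_div_lamPlus ω hν.ne', norm_div, div_lt_one ((norm_nonneg _).trans_lt hlt)]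
    exact hlt
  · rw [lamPlus_sub_lamMinus ω, div_ofReal_re]
    gcongr
  · calc a / ν ≤ (lamPlus a c ν ω).re := by
          rw [lamPlus_re, div_le_div_iff₀ hν (by positivity)]
          nlinarith
      _ ≤ ‖lamPlus a c ν ω‖ := re_le_norm _
end

section
/- Let a > 0, c > 0, L₁, L₂ > 0. There exist constants C > 0 and ν̄ > 0 such that for all 0 < ν ≤ ν̄, all ω ∈ ℝ, and all x ∈ [−L₁, L₂], the solution v̂ of the previous boundary value problem satisfies |v̂(x, ω)| ≤ (4ν/a²) |q(ω)| e^{Re λ₊(ω) (x − L₂)} ≤ C ν |q(ω)|. -/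
/-!
Write `s` for the principal square root of `a² + 4ν(c + iω)`, so that `λ± = (a ± s)/(2ν)`.
Since `Re s ≥ 0` and `Re s² = a² + 4νc ≥ a²`, we get `Re s ≥ a`; hence `Re λ₊ ≥ a/ν`,
`Re (λ₊ - λ₋) ≥ a/ν` and `|λ₋| ≤ |λ₊|`. Once `ν` is so small that `e^{-a(L₁+L₂)/ν} ≤ 1/2`, the
`λ₊`-term of the denominator dominates and is at least half of `ν |λ₊|² e^{Re λ₊ (L₁+L₂)}`,
while the numerator is at most `2 e^{Re λ₊ (x+L₁)}`. This gives `|v̂| ≤ 4 |q| e^{Re λ₊ (x-L₂)}/(ν|λ₊|²)`,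
and `|λ₊| ≥ a/ν` turns the factor into `4ν/a²`.
-/

open Complex

/-- The explicit Fourier-mode solution of the boundary value problem. -/
noncomputable def vhat (a c ν L₁ L₂ : ℝ) (q : ℝ → ℂ) (x ω : ℝ) : ℂ :=
  q ω * (Complex.exp (lamPlus a c ν ω * ((x : ℂ) + L₁)) -
      Complex.exp (lamMinus a c ν ω * ((x : ℂ) + L₁))) /
    ((ν : ℂ) * (lamPlus a c ν ω) ^ 2 * Complex.exp (lamPlus a c ν ω * ((L₂ : ℂ) + L₁)) -
      (ν : ℂ) * (lamMinus a c ν ω) ^ 2 * Complex.exp (lamMinus a c ν ω * ((L₂ : ℂ) + L₁)))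

lemma re_cpow_one_half_nonneg (z : ℂ) : 0 ≤ (z ^ (1 / 2 : ℂ)).re := by
  rw [one_div, cpow_inv_two_re]
  exact Real.sqrt_nonneg _

lemma le_re_cpow_one_half {z : ℂ} {b : ℝ} (hz : b ^ 2 ≤ z.re) :
    b ≤ (z ^ (1 / 2 : ℂ)).re := by
  have hsq : (z ^ (1 / 2 : ℂ)) ^ 2 = z := by
    rw [one_div, ← Nat.cast_two, cpow_nat_inv_pow _ two_ne_zero]
  have hre : (z ^ (1 / 2 : ℂ)).re ^ 2 - (z ^ (1 / 2 : ℂ)).im ^ 2 = z.re := by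
    conv_rhs => rw [← hsq]
    simp only [sq, mul_re]
  nlinarith [sq_nonneg (z ^ (1 / 2 : ℂ)).im, re_cpow_one_half_nonneg z]

lemma norm_ofReal_sub_le_norm_ofReal_add {a : ℝ} {s : ℂ} (ha : 0 ≤ a) (hs : 0 ≤ s.re) :
    ‖(a : ℂ) - s‖ ≤ ‖(a : ℂ) + s‖ := by
  rw [← sq_le_sq₀ (norm_nonneg _) (norm_nonneg _), Complex.sq_norm, Complex.sq_norm,
    normSq_apply, normSq_apply]
  simp only [sub_re, sub_im, add_re, add_im, ofReal_re, ofReal_im]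
  nlinarith [mul_nonneg ha hs]

lemma norm_exp_mul_ofReal (w : ℂ) (t : ℝ) : ‖exp (w * t)‖ = Real.exp (w.re * t) := by
  rw [norm_exp, re_mul_ofReal]

lemma norm_exp_sub_exp_le {lp lm : ℂ} {t : ℝ} (ht : 0 ≤ t) (hre : lm.re ≤ lp.re) :
    ‖exp (lp * t) - exp (lm * t)‖ ≤ 2 * Real.exp (lp.re * t) := by
  have hexp : Real.exp (lm.re * t) ≤ Real.exp (lp.re * t) := by gcongr
  calc ‖exp (lp * t) - exp (lm * t)‖ ≤ ‖exp (lp * t)‖ + ‖exp (lm * t)‖ := norm_sub_le _ _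
    _ ≤ 2 * Real.exp (lp.re * t) := by
      rw [norm_exp_mul_ofReal, norm_exp_mul_ofReal]
      linarith

lemma half_le_norm_sq_mul_exp_sub {lp lm : ℂ} {M : ℝ} (hnorm : ‖lm‖ ≤ ‖lp‖)
    (hgap : Real.log 2 ≤ (lp.re - lm.re) * M) :
    ‖lp‖ ^ 2 * Real.exp (lp.re * M) / 2 ≤ ‖lp ^ 2 * exp (lp * M) - lm ^ 2 * exp (lm * M)‖ := by
  have hhalf : Real.exp (lm.re * M) ≤ Real.exp (lp.re * M) / 2 := by
    rw [le_div_iff₀ two_pos, ← Real.exp_log two_pos, ← Real.exp_add]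
    gcongr
    linarith
  have hlm : ‖lm‖ ^ 2 * Real.exp (lm.re * M) ≤ ‖lp‖ ^ 2 * (Real.exp (lp.re * M) / 2) := by
    gcongr
  calc ‖lp‖ ^ 2 * Real.exp (lp.re * M) / 2
      ≤ ‖lp ^ 2 * exp (lp * M)‖ - ‖lm ^ 2 * exp (lm * M)‖ := by
        rw [norm_mul, norm_mul, norm_pow, norm_pow, norm_exp_mul_ofReal, norm_exp_mul_ofReal]
        linarith
    _ ≤ _ := norm_sub_norm_le _ _

lemma norm_exp_sub_exp_div_le {lp lm : ℂ} {ν t M : ℝ} (hν : 0 < ν) (hlp : lp ≠ 0)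
    (ht : 0 ≤ t) (hre : lm.re ≤ lp.re) (hnorm : ‖lm‖ ≤ ‖lp‖)
    (hgap : Real.log 2 ≤ (lp.re - lm.re) * M) :
    ‖(exp (lp * t) - exp (lm * t)) /
        (ν * lp ^ 2 * exp (lp * M) - ν * lm ^ 2 * exp (lm * M))‖ ≤
      4 / (ν * ‖lp‖ ^ 2) * Real.exp (lp.re * (t - M)) := by
  have hden_pos : 0 < ν * (‖lp‖ ^ 2 * Real.exp (lp.re * M) / 2) := by
    have := norm_pos_iff.mpr hlp
    positivity
  rw [show (ν : ℂ) * lp ^ 2 * exp (lp * M) - ν * lm ^ 2 * exp (lm * M) =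
      ν * (lp ^ 2 * exp (lp * M) - lm ^ 2 * exp (lm * M)) by ring,
    norm_div, norm_mul, norm_real, Real.norm_of_nonneg hν.le]
  calc _ ≤ 2 * Real.exp (lp.re * t) / (ν * (‖lp‖ ^ 2 * Real.exp (lp.re * M) / 2)) := by
        gcongr
        · exact norm_exp_sub_exp_le ht hre
        · exact half_le_norm_sq_mul_exp_sub hnorm hgap
    _ = 4 / (ν * ‖lp‖ ^ 2) * Real.exp (lp.re * (t - M)) := by
        rw [mul_sub, Real.exp_sub]
        field_simp
        ring

section Roots

variable (a : ℝ) {c ν : ℝ} (ω : ℝ)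

noncomputable def rootDisc (a c ν ω : ℝ) : ℂ :=
  ((a : ℂ) ^ 2 + 4 * (ν : ℂ) * ((c : ℂ) + (ω : ℂ) * Complex.I)) ^ (1 / 2 : ℂ)

lemma lamPlus_eq : lamPlus a c ν ω = ((a : ℂ) + rootDisc a c ν ω) / ((2 * ν : ℝ) : ℂ) := by
  rw [lamPlus, rootDisc]
  push_cast
  rfl

lemma lamMinus_eq : lamMinus a c ν ω = ((a : ℂ) - rootDisc a c ν ω) / ((2 * ν : ℝ) : ℂ) := by
  rw [lamMinus, rootDisc]
  push_cast
  rfl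

lemma le_re_rootDisc (hc : 0 ≤ c) (hν : 0 ≤ ν) : a ≤ (rootDisc a c ν ω).re := by
  apply le_re_cpow_one_half
  simp only [add_re, mul_re, sq, ofReal_re, ofReal_im, I_re, I_im]
  norm_num
  positivity

lemma div_le_re_lamPlus (hc : 0 ≤ c) (hν : 0 < ν) :
    a / ν ≤ (lamPlus a c ν ω).re := by
  have := le_re_rootDisc a ω hc hν.le
  rw [lamPlus_eq a, div_ofReal_re, add_re, ofReal_re, div_le_div_iff₀ hν (by positivity)]
  nlinarith

lemma div_le_re_lamPlus_sub_re_lamMinus (hc : 0 ≤ c) (hν : 0 < ν) :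
    a / ν ≤ (lamPlus a c ν ω).re - (lamMinus a c ν ω).re := by
  have := le_re_rootDisc a ω hc hν.le
  rw [lamPlus_eq a, lamMinus_eq a, div_ofReal_re, div_ofReal_re, add_re, sub_re, ofReal_re,
    ← sub_div, div_le_div_iff₀ hν (by positivity)]
  nlinarith

lemma norm_lamMinus_le_norm_lamPlus (ha : 0 ≤ a) :
    ‖lamMinus a c ν ω‖ ≤ ‖lamPlus a c ν ω‖ := by
  rw [lamPlus_eq a, lamMinus_eq a, norm_div, norm_div]
  gcongr
  exact norm_ofReal_sub_le_norm_ofReal_add ha (re_cpow_one_half_nonneg _)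

end Roots

lemma norm_vhat_le {a c ν L₁ L₂ x : ℝ} (q : ℝ → ℂ) (ω : ℝ) (ha : 0 < a) (hc : 0 ≤ c)
    (hν : 0 < ν) (hνsmall : ν * Real.log 2 ≤ a * (L₂ + L₁)) (hx : x ∈ Set.Icc (-L₁) L₂) :
    ‖vhat a c ν L₁ L₂ q x ω‖ ≤
      4 * ν / a ^ 2 * ‖q ω‖ * Real.exp ((lamPlus a c ν ω).re * (x - L₂)) := by
  have hre_ge : a / ν ≤ (lamPlus a c ν ω).re := div_le_re_lamPlus a ω hc hν
  have hgap_ge := div_le_re_lamPlus_sub_re_lamMinus a ω hc hν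
  have hnorm_ge : a / ν ≤ ‖lamPlus a c ν ω‖ := hre_ge.trans (re_le_norm _)
  have hlp : lamPlus a c ν ω ≠ 0 := norm_pos_iff.mp ((div_pos ha hν).trans_le hnorm_ge)
  have hM : 0 ≤ L₂ + L₁ := by linarith [hx.1, hx.2]
  have hgap : Real.log 2 ≤ ((lamPlus a c ν ω).re - (lamMinus a c ν ω).re) * (L₂ + L₁) :=
    calc Real.log 2 ≤ a / ν * (L₂ + L₁) := by
          rw [div_mul_eq_mul_div, le_div_iff₀ hν]
          linarith
      _ ≤ _ := by gcongr
  have hratio := norm_exp_sub_exp_div_le (t := x + L₁) hν hlp (by linarith [hx.1])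
    (by linarith [(div_pos ha hν).le]) (norm_lamMinus_le_norm_lamPlus a ω ha.le) hgap
  push_cast at hratio
  have hcoef : 4 / (ν * ‖lamPlus a c ν ω‖ ^ 2) ≤ 4 * ν / a ^ 2 :=
    calc 4 / (ν * ‖lamPlus a c ν ω‖ ^ 2) ≤ 4 / (ν * (a / ν) ^ 2) := by gcongr
      _ = 4 * ν / a ^ 2 := by field_simp
  calc ‖vhat a c ν L₁ L₂ q x ω‖ = ‖q ω‖ * ‖(exp (lamPlus a c ν ω * (x + L₁)) -
        exp (lamMinus a c ν ω * (x + L₁))) / (ν * lamPlus a c ν ω ^ 2 *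
        exp (lamPlus a c ν ω * (L₂ + L₁)) - ν * lamMinus a c ν ω ^ 2 *
        exp (lamMinus a c ν ω * (L₂ + L₁)))‖ := by
        rw [vhat, mul_div_assoc, norm_mul]
    _ ≤ ‖q ω‖ * (4 * ν / a ^ 2 * Real.exp ((lamPlus a c ν ω).re * (x - L₂))) := by
        gcongr
        refine hratio.trans ?_
        rw [show x + L₁ - (L₂ + L₁) = x - L₂ by ring]
        gcongr
    _ = _ := by ring

/-- Uniform small-viscosity bound for the Fourier modes:
`|v̂(x,ω)| ≤ (4ν/a²)|q(ω)| e^{Re λ₊ (x−L₂)} ≤ Cν|q(ω)|`. -/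
theorem fourier_mode_smallness (a c L₁ L₂ : ℝ) (ha : 0 < a) (hc : 0 < c)
    (hL₁ : 0 < L₁) (hL₂ : 0 < L₂) :
    ∃ C > 0, ∃ νbar > 0, ∀ ν : ℝ, 0 < ν → ν ≤ νbar → ∀ q : ℝ → ℂ, ∀ ω : ℝ,
      ∀ x ∈ Set.Icc (-L₁) L₂,
        ‖vhat a c ν L₁ L₂ q x ω‖ ≤
          4 * ν / a ^ 2 * ‖q ω‖ * Real.exp ((lamPlus a c ν ω).re * (x - L₂)) ∧
        4 * ν / a ^ 2 * ‖q ω‖ * Real.exp ((lamPlus a c ν ω).re * (x - L₂)) ≤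
          C * ν * ‖q ω‖ := by
  have hlog2 : 0 < Real.log 2 := Real.log_pos one_lt_two
  refine ⟨4 / a ^ 2, by positivity, a * (L₂ + L₁) / Real.log 2, by positivity, ?_⟩
  intro ν hν hνbar q ω x hx
  refine ⟨norm_vhat_le q ω ha hc.le hν ((le_div_iff₀ hlog2).mp hνbar) hx, ?_⟩
  have hre : 0 ≤ (lamPlus a c ν ω).re := (div_pos ha hν).le.trans (div_le_re_lamPlus a ω hc.le hν)
  have hexp : Real.exp ((lamPlus a c ν ω).re * (x - L₂)) ≤ 1 :=
    Real.exp_le_one_iff.mpr (mul_nonpos_of_nonneg_of_nonpos hre (by linarith [hx.2]))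
  calc 4 * ν / a ^ 2 * ‖q ω‖ * Real.exp ((lamPlus a c ν ω).re * (x - L₂))
      ≤ 4 * ν / a ^ 2 * ‖q ω‖ * 1 := by gcongr
    _ = 4 / a ^ 2 * ν * ‖q ω‖ := by ring
end

section
/- Let a > 0, c > 0, ν > 0 and let u₁ be a smooth solution on (−L₁,L₂)×(0,T) of ∂_t u₁ − ν ∂_x² u₁ + a ∂_x u₁ + c u₁ = f with u₁(−L₁,·) = 0, (∂_t + a∂_x + c)u₁(L₂,·) = 0, u₁(·,0) = 0. Then c ‖u₁‖²_{L²((−L₁,L₂)×(0,T))} + 2ν ‖∂_x u₁‖²_{L²} + a ‖u₁(L₂,·)‖²_{L²(0,T)} ≤ (1/c) ‖f‖²_{L²}. -/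
open Set MeasureTheory

/-! ### Auxiliary general lemmas -/

lemma adv_hdFst {g : ℝ × ℝ → ℝ} (hg : ContDiff ℝ (⊤ : ℕ∞) g) (x t : ℝ) :
    HasDerivAt (fun y => g (y, t)) (fderiv ℝ g (x, t) (1, 0)) x := by
  have h1 : HasFDerivAt g (fderiv ℝ g (x, t)) (x, t) :=
    (hg.differentiable (by simp) (x, t)).hasFDerivAt
  have h2 : HasDerivAt (fun y : ℝ => (y, t)) ((1 : ℝ), (0 : ℝ)) x :=
    (hasDerivAt_id x).prodMk (hasDerivAt_const x t)
  exact h1.comp_hasDerivAt x h2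

lemma adv_hdSnd {g : ℝ × ℝ → ℝ} (hg : ContDiff ℝ (⊤ : ℕ∞) g) (x t : ℝ) :
    HasDerivAt (fun s => g (x, s)) (fderiv ℝ g (x, t) (0, 1)) t := by
  have h1 : HasFDerivAt g (fderiv ℝ g (x, t)) (x, t) :=
    (hg.differentiable (by simp) (x, t)).hasFDerivAt
  have h2 : HasDerivAt (fun s : ℝ => (x, s)) ((0 : ℝ), (1 : ℝ)) t :=
    (hasDerivAt_const t x).prodMk (hasDerivAt_id t)
  exact h1.comp_hasDerivAt t h2

lemma adv_contDiff_fderiv {g : ℝ × ℝ → ℝ} (hg : ContDiff ℝ (⊤ : ℕ∞) g) (v : ℝ × ℝ) :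
    ContDiff ℝ (⊤ : ℕ∞) (fun q => fderiv ℝ g q v) :=
  (hg.fderiv_right (by simp)).clm_apply contDiff_const

lemma adv_young {c u F : ℝ} (hc : 0 < c) : u * F ≤ c / 2 * u ^ 2 + 1 / (2 * c) * F ^ 2 := by
  have h2 : (0:ℝ) < 2 * c := by linarith
  have key : c / 2 * u ^ 2 + 1 / (2 * c) * F ^ 2 - u * F = (c * u - F) ^ 2 / (2 * c) := by
    field_simp; ring
  nlinarith [div_nonneg (sq_nonneg (c * u - F)) h2.le]

lemma adv_final {a c ν P K1 Jux Ju K4 Jb JF : ℝ} (ha : 0 < a) (hc : 0 < c) (hν : 0 < ν)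
    (houter : P = K1 + ν * Jux + c * Ju + ν / a * K4 + (ν * c / a + a / 2) * Jb)
    (hY : P ≤ c / 2 * Ju + 1 / (2 * c) * JF)
    (h1 : 0 ≤ K1) (h4 : 0 ≤ ν / a * K4) (h5 : 0 ≤ ν * c / a * Jb) :
    c * Ju + 2 * ν * Jux + a * Jb ≤ 1 / c * JF := by
  have e1 : 1 / (2 * c) * JF = 1 / 2 * (1 / c * JF) := by
    field_simp
  linarith [houter, hY, h1, h4, h5, e1]

lemma adv_intOn {T₁ T₂ S₁ S₂ : ℝ} {g : ℝ × ℝ → ℝ} (hg : Continuous g) :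
    IntegrableOn g (Ioc T₁ T₂ ×ˢ Ioc S₁ S₂) := by
  have hcomp : IsCompact (Icc T₁ T₂ ×ˢ Icc S₁ S₂) := isCompact_Icc.prod isCompact_Icc
  exact (hg.continuousOn.integrableOn_compact hcomp).mono_set
    (prod_mono Ioc_subset_Icc_self Ioc_subset_Icc_self)

lemma adv_restrict_prod {B A : Set ℝ} :
    ((volume : Measure ℝ).restrict B).prod ((volume : Measure ℝ).restrict A)
      = (volume : Measure (ℝ × ℝ)).restrict (B ×ˢ A) := by
  rw [Measure.prod_restrict, ← Measure.volume_eq_prod]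

lemma adv_iter_eq_prod {B A : Set ℝ} {g : ℝ × ℝ → ℝ}
    (hg : IntegrableOn g (B ×ˢ A)) :
    (∫ t in B, ∫ x in A, g (t, x)) = ∫ p in B ×ˢ A, g p := by
  have hg' : Integrable (Function.uncurry fun t x => g (t, x))
      (((volume : Measure ℝ).restrict B).prod ((volume : Measure ℝ).restrict A)) := by
    rw [adv_restrict_prod]; exact hg
  have := integral_integral hg'
  simpa [adv_restrict_prod] using this

lemma adv_iter_swap {B A : Set ℝ} {g : ℝ × ℝ → ℝ}
    (hg : IntegrableOn g (B ×ˢ A)) :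
    (∫ t in B, ∫ x in A, g (t, x)) = ∫ x in A, ∫ t in B, g (t, x) := by
  have hg' : Integrable (Function.uncurry fun t x => g (t, x))
      (((volume : Measure ℝ).restrict B).prod ((volume : Measure ℝ).restrict A)) := by
    rw [adv_restrict_prod]; exact hg
  exact integral_integral_swap hg'

lemma adv_param_int {B A : Set ℝ} {g : ℝ × ℝ → ℝ}
    (hg : IntegrableOn g (B ×ˢ A)) :
    Integrable (fun t => ∫ x in A, g (t, x)) ((volume : Measure ℝ).restrict B) := by
  have hg' : Integrable g
      (((volume : Measure ℝ).restrict B).prod ((volume : Measure ℝ).restrict A)) := by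
    rw [adv_restrict_prod]; exact hg
  exact hg'.integral_prod_left

/-! ### Partial derivatives of a smooth function of two variables -/

noncomputable def aV (u : ℝ → ℝ → ℝ) (q : ℝ × ℝ) : ℝ :=
  fderiv ℝ (fun p : ℝ × ℝ => u p.1 p.2) q (1, 0)

noncomputable def aW (u : ℝ → ℝ → ℝ) (q : ℝ × ℝ) : ℝ :=
  fderiv ℝ (fun p : ℝ × ℝ => u p.1 p.2) q (0, 1)

noncomputable def aVx (u : ℝ → ℝ → ℝ) (q : ℝ × ℝ) : ℝ :=
  fderiv ℝ (aV u) q (1, 0)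

noncomputable def aF (ν a c : ℝ) (u : ℝ → ℝ → ℝ) (q : ℝ × ℝ) : ℝ :=
  aW u q - ν * aVx u q + a * aV u q + c * u q.1 q.2

section derivs
variable {u : ℝ → ℝ → ℝ}

lemma aV_contDiff (hu : ContDiff ℝ (⊤ : ℕ∞) (fun q : ℝ × ℝ => u q.1 q.2)) : ContDiff ℝ (⊤ : ℕ∞) (aV u) := adv_contDiff_fderiv hu _
lemma aW_contDiff (hu : ContDiff ℝ (⊤ : ℕ∞) (fun q : ℝ × ℝ => u q.1 q.2)) : ContDiff ℝ (⊤ : ℕ∞) (aW u) := adv_contDiff_fderiv hu _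
lemma aVx_contDiff (hu : ContDiff ℝ (⊤ : ℕ∞) (fun q : ℝ × ℝ => u q.1 q.2)) : ContDiff ℝ (⊤ : ℕ∞) (aVx u) := adv_contDiff_fderiv (aV_contDiff hu) _

lemma aV_hasDerivAt (hu : ContDiff ℝ (⊤ : ℕ∞) (fun q : ℝ × ℝ => u q.1 q.2)) (x t : ℝ) : HasDerivAt (fun y => u y t) (aV u (x, t)) x :=
  adv_hdFst hu x t

lemma aW_hasDerivAt (hu : ContDiff ℝ (⊤ : ℕ∞) (fun q : ℝ × ℝ => u q.1 q.2)) (x t : ℝ) : HasDerivAt (fun s => u x s) (aW u (x, t)) t :=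
  adv_hdSnd hu x t

lemma aVx_hasDerivAt (hu : ContDiff ℝ (⊤ : ℕ∞) (fun q : ℝ × ℝ => u q.1 q.2)) (x t : ℝ) : HasDerivAt (fun y => aV u (y, t)) (aVx u (x, t)) x :=
  adv_hdFst (aV_contDiff hu) x t

lemma aderiv_x (hu : ContDiff ℝ (⊤ : ℕ∞) (fun q : ℝ × ℝ => u q.1 q.2)) (t x : ℝ) : deriv (fun y => u y t) x = aV u (x, t) :=
  (aV_hasDerivAt hu x t).deriv

lemma aderiv_t (hu : ContDiff ℝ (⊤ : ℕ∞) (fun q : ℝ × ℝ => u q.1 q.2)) (t x : ℝ) : deriv (fun s => u x s) t = aW u (x, t) :=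
  (aW_hasDerivAt hu x t).deriv

lemma aderiv_xx (hu : ContDiff ℝ (⊤ : ℕ∞) (fun q : ℝ × ℝ => u q.1 q.2)) (t x : ℝ) :
    deriv (fun y => deriv (fun z => u z t) y) x = aVx u (x, t) := by
  have h : (fun y => deriv (fun z => u z t) y) = fun y => aV u (y, t) :=
    funext fun y => aderiv_x hu t y
  rw [h]
  exact (aVx_hasDerivAt hu x t).deriv

end derivs

/-- Energy estimate for the advection–diffusion equation with homogeneous
Dirichlet condition at the inflow `x = −L₁` and homogeneous absorbing boundary
condition at the outflow `x = L₂`: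
`c‖u₁‖² + 2ν‖∂_x u₁‖² + a‖u₁(L₂,·)‖² ≤ (1/c)‖f‖²`. -/
theorem advection_diffusion_energy_estimate (a c ν L₁ L₂ T : ℝ)
    (ha : 0 < a) (hc : 0 < c) (hν : 0 < ν) (hL₁ : 0 < L₁) (hL₂ : 0 < L₂) (hT : 0 < T)
    (u₁ f : ℝ → ℝ → ℝ)
    (hu : ContDiff ℝ (⊤ : ℕ∞) (fun q : ℝ × ℝ => u₁ q.1 q.2))
    (hfL2 : MeasureTheory.IntegrableOn (fun q : ℝ × ℝ => (f q.1 q.2) ^ 2)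
      (Ioc (-L₁) L₂ ×ˢ Ioc 0 T))
    (heq : ∀ x ∈ Ioo (-L₁) L₂, ∀ t ∈ Ioo 0 T,
      deriv (fun s => u₁ x s) t - ν * deriv (fun y => deriv (fun z => u₁ z t) y) x +
        a * deriv (fun y => u₁ y t) x + c * u₁ x t = f x t)
    (hleft : ∀ t ∈ Icc 0 T, u₁ (-L₁) t = 0)
    (hright : ∀ t ∈ Icc 0 T,
      deriv (fun s => u₁ L₂ s) t + a * deriv (fun y => u₁ y t) L₂ + c * u₁ L₂ t = 0)
    (hinit : ∀ x ∈ Icc (-L₁) L₂, u₁ x 0 = 0) :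
    c * (∫ t in Ioc 0 T, ∫ x in Ioc (-L₁) L₂, (u₁ x t) ^ 2) +
      2 * ν * (∫ t in Ioc 0 T, ∫ x in Ioc (-L₁) L₂, (deriv (fun y => u₁ y t) x) ^ 2) +
      a * (∫ t in Ioc 0 T, (u₁ L₂ t) ^ 2) ≤
    (1 / c) * (∫ t in Ioc 0 T, ∫ x in Ioc (-L₁) L₂, (f x t) ^ 2) := by
  have hL : -L₁ ≤ L₂ := by linarith
  have hAsub : Ioc (-L₁) L₂ ⊆ Icc (-L₁) L₂ := Ioc_subset_Icc_self
  have hBsub : Ioc 0 T ⊆ Icc 0 T := Ioc_subset_Icc_self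
  have hL2mem : L₂ ∈ Icc (-L₁) L₂ := ⟨hL, le_refl _⟩
  -- continuity facts
  have hcu : Continuous fun q : ℝ × ℝ => u₁ q.1 q.2 := hu.continuous
  have hcV : Continuous (aV u₁) := (aV_contDiff hu).continuous
  have hcW : Continuous (aW u₁) := (aW_contDiff hu).continuous
  have hcVx : Continuous (aVx u₁) := (aVx_contDiff hu).continuous
  have hcF : Continuous (aF ν a c u₁) := by
    unfold aF
    exact ((hcW.sub (continuous_const.mul hcVx)).add (continuous_const.mul hcV)).add
      (continuous_const.mul hcu)
  have hswap : Continuous fun p : ℝ × ℝ => (p.2, p.1) :=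
    continuous_snd.prodMk continuous_fst
  have hcu' : Continuous fun p : ℝ × ℝ => u₁ p.2 p.1 := hcu.comp hswap
  have hsec : ∀ (g : ℝ × ℝ → ℝ), Continuous g → ∀ t : ℝ, Continuous fun y : ℝ => g (y, t) :=
    fun g hg t => hg.comp (continuous_id.prodMk continuous_const)
  have hsect : ∀ (g : ℝ × ℝ → ℝ), Continuous g → ∀ x : ℝ, Continuous fun s : ℝ => g (x, s) :=
    fun g hg x => hg.comp (continuous_const.prodMk continuous_id)
  -- rewrite the x-derivative in the goal
  have hderx : ∀ t x : ℝ, deriv (fun y => u₁ y t) x = aV u₁ (x, t) := fun t x => aderiv_x hu t x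
  simp only [hderx]
  -- replace f by the continuous function aF
  have hfF : ∀ x ∈ Ioo (-L₁) L₂, ∀ t ∈ Ioo 0 T, f x t = aF ν a c u₁ (x, t) := by
    intro x hx t ht
    have h := heq x hx t ht
    rw [aderiv_x hu, aderiv_t hu, aderiv_xx hu] at h
    simp only [aF]
    linarith
  have haeT : ∀ᵐ t : ℝ, t ∈ Ioc 0 T → t ∈ Ioo 0 T := by
    refine ae_iff.2 (measure_mono_null ?_ (Real.volume_singleton (a := T)))
    intro t ht
    simp only [mem_setOf_eq, Classical.not_imp] at ht
    obtain ⟨h1, h2⟩ := ht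
    have hTle : T ≤ t := not_lt.1 fun hlt => h2 ⟨h1.1, hlt⟩
    exact mem_singleton_iff.2 (le_antisymm h1.2 hTle)
  have haeX : ∀ᵐ x : ℝ, x ∈ Ioc (-L₁) L₂ → x ∈ Ioo (-L₁) L₂ := by
    refine ae_iff.2 (measure_mono_null ?_ (Real.volume_singleton (a := L₂)))
    intro x hx
    simp only [mem_setOf_eq, Classical.not_imp] at hx
    obtain ⟨h1, h2⟩ := hx
    have hle : L₂ ≤ x := not_lt.1 fun hlt => h2 ⟨h1.1, hlt⟩
    exact mem_singleton_iff.2 (le_antisymm h1.2 hle)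
  have hJf : (∫ t in Ioc 0 T, ∫ x in Ioc (-L₁) L₂, (f x t) ^ 2)
      = ∫ t in Ioc 0 T, ∫ x in Ioc (-L₁) L₂, (aF ν a c u₁ (x, t)) ^ 2 := by
    refine setIntegral_congr_ae measurableSet_Ioc ?_
    filter_upwards [haeT] with t ht htB
    refine setIntegral_congr_ae measurableSet_Ioc ?_
    filter_upwards [haeX] with x hx hxA
    rw [hfF x (hx hxA) t (ht htB)]
  rw [hJf]
  -- per-time-slice energy identity (integration by parts in x + boundary conditions)
  have hxid : ∀ t ∈ Icc 0 T,
      (∫ x in Ioc (-L₁) L₂, u₁ x t * aF ν a c u₁ (x, t))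
        = (∫ x in Ioc (-L₁) L₂, u₁ x t * aW u₁ (x, t))
          + ν * (∫ x in Ioc (-L₁) L₂, (aV u₁ (x, t)) ^ 2)
          + c * (∫ x in Ioc (-L₁) L₂, (u₁ x t) ^ 2)
          + ν / a * (u₁ L₂ t * aW u₁ (L₂, t))
          + (ν * c / a + a / 2) * (u₁ L₂ t) ^ 2 := by
    intro t ht
    have hΦ : ∀ x : ℝ, HasDerivAt
        (fun y => -ν * (u₁ y t * aV u₁ (y, t)) + a / 2 * (u₁ y t) ^ 2)
        (-ν * ((aV u₁ (x, t)) ^ 2 + u₁ x t * aVx u₁ (x, t))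
          + a * (u₁ x t * aV u₁ (x, t))) x := by
      intro x
      have h1 : HasDerivAt (fun y => u₁ y t * aV u₁ (y, t))
          (aV u₁ (x, t) * aV u₁ (x, t) + u₁ x t * aVx u₁ (x, t)) x :=
        (aV_hasDerivAt hu x t).mul (aVx_hasDerivAt hu x t)
      have h2 : HasDerivAt (fun y => (u₁ y t) ^ 2)
          ((2 : ℕ) * (u₁ x t) ^ (2 - 1) * aV u₁ (x, t)) x := (aV_hasDerivAt hu x t).pow 2
      have h3 := (h1.const_mul (-ν)).add (h2.const_mul (a / 2))
      refine h3.congr_deriv ?_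
      push_cast
      ring
    have hcφ : Continuous fun x : ℝ =>
        -ν * ((aV u₁ (x, t)) ^ 2 + u₁ x t * aVx u₁ (x, t))
          + a * (u₁ x t * aV u₁ (x, t)) := by
      have c1 := hsec _ hcV t
      have c2 := hsec _ hcu t
      have c3 := hsec _ hcVx t
      exact (continuous_const.mul ((c1.pow 2).add (c2.mul c3))).add
        (continuous_const.mul (c2.mul c1))
    have hFTC : (∫ x in Ioc (-L₁) L₂,
        (-ν * ((aV u₁ (x, t)) ^ 2 + u₁ x t * aVx u₁ (x, t))
          + a * (u₁ x t * aV u₁ (x, t))))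
        = (-ν * (u₁ L₂ t * aV u₁ (L₂, t)) + a / 2 * (u₁ L₂ t) ^ 2)
          - (-ν * (u₁ (-L₁) t * aV u₁ (-L₁, t)) + a / 2 * (u₁ (-L₁) t) ^ 2) := by
      rw [← intervalIntegral.integral_of_le hL]
      exact intervalIntegral.integral_eq_sub_of_hasDerivAt (fun x _ => hΦ x)
        (hcφ.intervalIntegrable _ _)
    rw [hleft t ht] at hFTC
    have hb := hright t ht
    rw [aderiv_x hu, aderiv_t hu] at hb
    have hbdry : -ν * (u₁ L₂ t * aV u₁ (L₂, t))
        = ν / a * (u₁ L₂ t * aW u₁ (L₂, t)) + ν * c / a * (u₁ L₂ t) ^ 2 := by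
      have ha' : a ≠ 0 := ne_of_gt ha
      have h2 : aV u₁ (L₂, t) = -(aW u₁ (L₂, t) + c * u₁ L₂ t) / a := by
        rw [eq_div_iff ha']
        linarith
      rw [h2]
      field_simp
    have i1 : IntegrableOn (fun x => u₁ x t * aW u₁ (x, t)) (Ioc (-L₁) L₂) :=
      ((hsec _ hcu t).mul (hsec _ hcW t)).integrableOn_Ioc
    have i2 : IntegrableOn (fun x => (aV u₁ (x, t)) ^ 2) (Ioc (-L₁) L₂) :=
      ((hsec _ hcV t).pow 2).integrableOn_Ioc
    have i3 : IntegrableOn (fun x => (u₁ x t) ^ 2) (Ioc (-L₁) L₂) :=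
      ((hsec _ hcu t).pow 2).integrableOn_Ioc
    have i123 : IntegrableOn (fun x => u₁ x t * aW u₁ (x, t) + ν * (aV u₁ (x, t)) ^ 2
        + c * (u₁ x t) ^ 2) (Ioc (-L₁) L₂) :=
      (i1.add (i2.const_mul ν)).add (i3.const_mul c)
    have i4 : IntegrableOn (fun x => -ν * ((aV u₁ (x, t)) ^ 2 + u₁ x t * aVx u₁ (x, t))
        + a * (u₁ x t * aV u₁ (x, t))) (Ioc (-L₁) L₂) := hcφ.integrableOn_Ioc
    have hsplit : (∫ x in Ioc (-L₁) L₂, u₁ x t * aF ν a c u₁ (x, t))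
        = (∫ x in Ioc (-L₁) L₂, (u₁ x t * aW u₁ (x, t) + ν * (aV u₁ (x, t)) ^ 2
            + c * (u₁ x t) ^ 2))
          + ∫ x in Ioc (-L₁) L₂, (-ν * ((aV u₁ (x, t)) ^ 2 + u₁ x t * aVx u₁ (x, t))
            + a * (u₁ x t * aV u₁ (x, t))) := by
      rw [← integral_add i123 i4]
      refine integral_congr_ae (Filter.Eventually.of_forall fun x => ?_)
      simp only [aF]
      ring
    have i12 : IntegrableOn (fun x => u₁ x t * aW u₁ (x, t) + ν * aV u₁ (x, t) ^ 2)
        (Ioc (-L₁) L₂) := i1.add (i2.const_mul ν)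
    rw [hsplit, integral_add i12 (i3.const_mul c),
      integral_add i1 (i2.const_mul ν), integral_const_mul, integral_const_mul, hFTC]
    linarith [hbdry]
  -- two-variable continuity (with swapped coordinates (t, x))
  have hcuW2 : Continuous fun p : ℝ × ℝ => u₁ p.2 p.1 * aW u₁ (p.2, p.1) :=
    hcu'.mul (hcW.comp hswap)
  have hcV2 : Continuous fun p : ℝ × ℝ => (aV u₁ (p.2, p.1)) ^ 2 := (hcV.comp hswap).pow 2
  have hcu2 : Continuous fun p : ℝ × ℝ => (u₁ p.2 p.1) ^ 2 := hcu'.pow 2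
  have hcF2 : Continuous fun p : ℝ × ℝ => (aF ν a c u₁ (p.2, p.1)) ^ 2 :=
    (hcF.comp hswap).pow 2
  have hcuF : Continuous fun p : ℝ × ℝ => u₁ p.2 p.1 * aF ν a c u₁ (p.2, p.1) :=
    hcu'.mul (hcF.comp hswap)
  -- integrate the slice identity in time
  have j1 : Integrable (fun t => ∫ x in Ioc (-L₁) L₂, u₁ x t * aW u₁ (x, t))
      ((volume : Measure ℝ).restrict (Ioc 0 T)) :=
    adv_param_int (g := fun p => u₁ p.2 p.1 * aW u₁ (p.2, p.1)) (adv_intOn hcuW2)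
  have j2 : Integrable (fun t => ∫ x in Ioc (-L₁) L₂, (aV u₁ (x, t)) ^ 2)
      ((volume : Measure ℝ).restrict (Ioc 0 T)) :=
    adv_param_int (g := fun p => (aV u₁ (p.2, p.1)) ^ 2) (adv_intOn hcV2)
  have j3 : Integrable (fun t => ∫ x in Ioc (-L₁) L₂, (u₁ x t) ^ 2)
      ((volume : Measure ℝ).restrict (Ioc 0 T)) :=
    adv_param_int (g := fun p => (u₁ p.2 p.1) ^ 2) (adv_intOn hcu2)
  have j4 : Integrable (fun t => u₁ L₂ t * aW u₁ (L₂, t))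
      ((volume : Measure ℝ).restrict (Ioc 0 T)) :=
    ((hsect _ hcu L₂).mul (hsect _ hcW L₂)).integrableOn_Ioc
  have j5 : Integrable (fun t => (u₁ L₂ t) ^ 2)
      ((volume : Measure ℝ).restrict (Ioc 0 T)) :=
    ((hsect _ hcu L₂).pow 2).integrableOn_Ioc
  have houter : (∫ t in Ioc 0 T, ∫ x in Ioc (-L₁) L₂, u₁ x t * aF ν a c u₁ (x, t))
      = (∫ t in Ioc 0 T, ∫ x in Ioc (-L₁) L₂, u₁ x t * aW u₁ (x, t))
        + ν * (∫ t in Ioc 0 T, ∫ x in Ioc (-L₁) L₂, (aV u₁ (x, t)) ^ 2)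
        + c * (∫ t in Ioc 0 T, ∫ x in Ioc (-L₁) L₂, (u₁ x t) ^ 2)
        + ν / a * (∫ t in Ioc 0 T, u₁ L₂ t * aW u₁ (L₂, t))
        + (ν * c / a + a / 2) * (∫ t in Ioc 0 T, (u₁ L₂ t) ^ 2) := by
    rw [setIntegral_congr_ae measurableSet_Ioc
      (Filter.Eventually.of_forall fun t ht => hxid t (hBsub ht))]
    have j12 : Integrable (fun t => (∫ x in Ioc (-L₁) L₂, u₁ x t * aW u₁ (x, t))
        + ν * ∫ x in Ioc (-L₁) L₂, (aV u₁ (x, t)) ^ 2)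
        ((volume : Measure ℝ).restrict (Ioc 0 T)) := j1.add (j2.const_mul ν)
    have j123 : Integrable (fun t => ((∫ x in Ioc (-L₁) L₂, u₁ x t * aW u₁ (x, t))
        + ν * ∫ x in Ioc (-L₁) L₂, (aV u₁ (x, t)) ^ 2)
        + c * ∫ x in Ioc (-L₁) L₂, (u₁ x t) ^ 2)
        ((volume : Measure ℝ).restrict (Ioc 0 T)) := j12.add (j3.const_mul c)
    have j1234 : Integrable (fun t => (((∫ x in Ioc (-L₁) L₂, u₁ x t * aW u₁ (x, t))
        + ν * ∫ x in Ioc (-L₁) L₂, (aV u₁ (x, t)) ^ 2)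
        + c * ∫ x in Ioc (-L₁) L₂, (u₁ x t) ^ 2)
        + ν / a * (u₁ L₂ t * aW u₁ (L₂, t)))
        ((volume : Measure ℝ).restrict (Ioc 0 T)) := j123.add (j4.const_mul (ν / a))
    rw [integral_add j1234 (j5.const_mul (ν * c / a + a / 2)),
      integral_add j123 (j4.const_mul (ν / a)),
      integral_add j12 (j3.const_mul c),
      integral_add j1 (j2.const_mul ν),
      integral_const_mul, integral_const_mul, integral_const_mul, integral_const_mul]
  -- the time-derivative term is nonnegative (FTC in t)
  have hT1 : (∫ t in Ioc 0 T, ∫ x in Ioc (-L₁) L₂, u₁ x t * aW u₁ (x, t))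
      = ∫ x in Ioc (-L₁) L₂, 1 / 2 * (u₁ x T) ^ 2 := by
    have hswp : (∫ t in Ioc 0 T, ∫ x in Ioc (-L₁) L₂, u₁ x t * aW u₁ (x, t))
        = ∫ x in Ioc (-L₁) L₂, ∫ t in Ioc 0 T, u₁ x t * aW u₁ (x, t) :=
      adv_iter_swap (g := fun p => u₁ p.2 p.1 * aW u₁ (p.2, p.1)) (adv_intOn hcuW2)
    rw [hswp]
    refine setIntegral_congr_ae measurableSet_Ioc
      (Filter.Eventually.of_forall fun x hx => ?_)
    have hD : ∀ s : ℝ, HasDerivAt (fun r => 1 / 2 * (u₁ x r) ^ 2)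
        (u₁ x s * aW u₁ (x, s)) s := by
      intro s
      have h2 : HasDerivAt (fun r => (u₁ x r) ^ 2)
          ((2 : ℕ) * (u₁ x s) ^ (2 - 1) * aW u₁ (x, s)) s := (aW_hasDerivAt hu x s).pow 2
      have h3 := h2.const_mul (1 / 2 : ℝ)
      refine h3.congr_deriv ?_
      push_cast
      ring
    have hcont : Continuous fun s : ℝ => u₁ x s * aW u₁ (x, s) :=
      (hsect _ hcu x).mul (hsect _ hcW x)
    rw [← intervalIntegral.integral_of_le hT.le,
      intervalIntegral.integral_eq_sub_of_hasDerivAt (fun s _ => hD s)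
        (hcont.intervalIntegrable _ _),
      hinit x (hAsub hx)]
    ring
  have hT1nonneg : 0 ≤ ∫ t in Ioc 0 T, ∫ x in Ioc (-L₁) L₂, u₁ x t * aW u₁ (x, t) := by
    rw [hT1]
    exact setIntegral_nonneg measurableSet_Ioc fun x _ => by positivity
  -- the boundary time-derivative term is nonnegative (FTC in t at x = L₂)
  have hT4 : (∫ t in Ioc 0 T, u₁ L₂ t * aW u₁ (L₂, t)) = 1 / 2 * (u₁ L₂ T) ^ 2 := by
    have hD : ∀ s : ℝ, HasDerivAt (fun r => 1 / 2 * (u₁ L₂ r) ^ 2)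
        (u₁ L₂ s * aW u₁ (L₂, s)) s := by
      intro s
      have h2 : HasDerivAt (fun r => (u₁ L₂ r) ^ 2)
          ((2 : ℕ) * (u₁ L₂ s) ^ (2 - 1) * aW u₁ (L₂, s)) s := (aW_hasDerivAt hu L₂ s).pow 2
      have h3 := h2.const_mul (1 / 2 : ℝ)
      refine h3.congr_deriv ?_
      push_cast
      ring
    have hcont : Continuous fun s : ℝ => u₁ L₂ s * aW u₁ (L₂, s) :=
      (hsect _ hcu L₂).mul (hsect _ hcW L₂)
    rw [← intervalIntegral.integral_of_le hT.le,
      intervalIntegral.integral_eq_sub_of_hasDerivAt (fun s _ => hD s)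
        (hcont.intervalIntegrable _ _),
      hinit L₂ hL2mem]
    ring
  have hT4nonneg : 0 ≤ ν / a * ∫ t in Ioc 0 T, u₁ L₂ t * aW u₁ (L₂, t) := by
    rw [hT4]
    positivity
  -- Young's inequality at the level of the product integral
  have hprod0 : (∫ t in Ioc 0 T, ∫ x in Ioc (-L₁) L₂, u₁ x t * aF ν a c u₁ (x, t))
      = ∫ p in Ioc 0 T ×ˢ Ioc (-L₁) L₂, u₁ p.2 p.1 * aF ν a c u₁ (p.2, p.1) :=
    adv_iter_eq_prod (g := fun p => u₁ p.2 p.1 * aF ν a c u₁ (p.2, p.1)) (adv_intOn hcuF)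
  have hprodu : (∫ t in Ioc 0 T, ∫ x in Ioc (-L₁) L₂, (u₁ x t) ^ 2)
      = ∫ p in Ioc 0 T ×ˢ Ioc (-L₁) L₂, (u₁ p.2 p.1) ^ 2 :=
    adv_iter_eq_prod (g := fun p => (u₁ p.2 p.1) ^ 2) (adv_intOn hcu2)
  have hprodF : (∫ t in Ioc 0 T, ∫ x in Ioc (-L₁) L₂, (aF ν a c u₁ (x, t)) ^ 2)
      = ∫ p in Ioc 0 T ×ˢ Ioc (-L₁) L₂, (aF ν a c u₁ (p.2, p.1)) ^ 2 :=
    adv_iter_eq_prod (g := fun p => (aF ν a c u₁ (p.2, p.1)) ^ 2) (adv_intOn hcF2)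
  have hmono : (∫ p in Ioc 0 T ×ˢ Ioc (-L₁) L₂, u₁ p.2 p.1 * aF ν a c u₁ (p.2, p.1))
      ≤ ∫ p in Ioc 0 T ×ˢ Ioc (-L₁) L₂,
          (c / 2 * (u₁ p.2 p.1) ^ 2 + 1 / (2 * c) * (aF ν a c u₁ (p.2, p.1)) ^ 2) :=
    integral_mono (adv_intOn hcuF)
      (((adv_intOn hcu2).const_mul _).add ((adv_intOn hcF2).const_mul _))
      (fun p => adv_young hc)
  have hsplitRHS : (∫ p in Ioc 0 T ×ˢ Ioc (-L₁) L₂,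
      (c / 2 * (u₁ p.2 p.1) ^ 2 + 1 / (2 * c) * (aF ν a c u₁ (p.2, p.1)) ^ 2))
      = c / 2 * (∫ p in Ioc 0 T ×ˢ Ioc (-L₁) L₂, (u₁ p.2 p.1) ^ 2)
        + 1 / (2 * c) * ∫ p in Ioc 0 T ×ˢ Ioc (-L₁) L₂, (aF ν a c u₁ (p.2, p.1)) ^ 2 := by
    rw [integral_add ((adv_intOn hcu2).const_mul _) ((adv_intOn hcF2).const_mul _),
      integral_const_mul, integral_const_mul]
  have hY : (∫ t in Ioc 0 T, ∫ x in Ioc (-L₁) L₂, u₁ x t * aF ν a c u₁ (x, t))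
      ≤ c / 2 * (∫ t in Ioc 0 T, ∫ x in Ioc (-L₁) L₂, (u₁ x t) ^ 2)
        + 1 / (2 * c) * ∫ t in Ioc 0 T, ∫ x in Ioc (-L₁) L₂, (aF ν a c u₁ (x, t)) ^ 2 := by
    rw [hprod0, hprodu, hprodF]
    calc (∫ p in Ioc 0 T ×ˢ Ioc (-L₁) L₂, u₁ p.2 p.1 * aF ν a c u₁ (p.2, p.1))
        ≤ _ := hmono
      _ = _ := hsplitRHS
  -- final bookkeeping
  have hJb : 0 ≤ ∫ t in Ioc 0 T, (u₁ L₂ t) ^ 2 :=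
    setIntegral_nonneg measurableSet_Ioc fun t _ => sq_nonneg _
  have hJbterm : 0 ≤ ν * c / a * ∫ t in Ioc 0 T, (u₁ L₂ t) ^ 2 := by positivity
  exact adv_final ha hc hν houter hY hT1nonneg hT4nonneg hJbterm
end

section
/- Let a < 0, c > 0, ν > 0, L₁ > 0, and let v be a smooth solution on (−L₁,0)×(0,T) of ∂_t v − ν ∂_x² v + a ∂_x v + c v = 0 with v(−L₁,·) = 0, (∂_t − a ∂_x + (a²/ν + c)) v(0,·) = g, v(·,0) = 0. Then c ‖v‖²_{L²((−L₁,0)×(0,T))} ≤ (ν²/|a|³) ‖g‖²_{L²(0,T)}; in particular ‖v‖_{L²} ≤ C ν ‖g‖_{L²} with C = 1/√(c|a|³). -/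
open Set MeasureTheory

set_option maxHeartbeats 1000000

/-- Energy estimate for the homogeneous advection–diffusion equation (`a < 0`)
on `(−L₁,0)` with a modified-advection boundary condition at `x = 0`:
`c‖v‖² ≤ (ν²/|a|³)‖g‖²`, hence `‖v‖ ≤ Cν‖g‖` with `C = 1/√(c|a|³)`. -/
theorem advection_diffusion_Lma_boundary_estimate (a c ν L₁ T : ℝ)
    (ha : a < 0) (hc : 0 < c) (hν : 0 < ν) (hL₁ : 0 < L₁) (hT : 0 < T)
    (v : ℝ → ℝ → ℝ) (g : ℝ → ℝ)
    (hv : ContDiff ℝ (⊤ : ℕ∞) (fun q : ℝ × ℝ => v q.1 q.2))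
    (hgL2 : MeasureTheory.IntegrableOn (fun t => (g t) ^ 2) (Ioc 0 T))
    (heq : ∀ x ∈ Ioo (-L₁) 0, ∀ t ∈ Ioo 0 T,
      deriv (fun s => v x s) t - ν * deriv (fun y => deriv (fun z => v z t) y) x +
        a * deriv (fun y => v y t) x + c * v x t = 0)
    (hleft : ∀ t ∈ Icc 0 T, v (-L₁) t = 0)
    (hright : ∀ t ∈ Icc 0 T,
      deriv (fun s => v 0 s) t - a * deriv (fun y => v y t) 0 +
        (a ^ 2 / ν + c) * v 0 t = g t)
    (hinit : ∀ x ∈ Icc (-L₁) 0, v x 0 = 0) :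
    c * (∫ t in Ioc 0 T, ∫ x in Ioc (-L₁) 0, (v x t) ^ 2) ≤
      (ν ^ 2 / |a| ^ 3) * (∫ t in Ioc 0 T, (g t) ^ 2) ∧
    Real.sqrt (∫ t in Ioc 0 T, ∫ x in Ioc (-L₁) 0, (v x t) ^ 2) ≤
      (1 / Real.sqrt (c * |a| ^ 3)) * ν * Real.sqrt (∫ t in Ioc 0 T, (g t) ^ 2) := by
  have habs : |a| = -a := abs_of_neg ha
  have hL : (-L₁ : ℝ) ≤ 0 := by linarith
  -- partial derivatives
  set F : ℝ × ℝ → ℝ := fun q => v q.1 q.2 with hFdef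
  have hF : ContDiff ℝ (⊤ : ℕ∞) F := hv
  set W₁ : ℝ × ℝ → ℝ := fun q => fderiv ℝ F q (1, 0) with hW₁def
  set W₂ : ℝ × ℝ → ℝ := fun q => fderiv ℝ F q (0, 1) with hW₂def
  have hFc : ContDiff ℝ (⊤ : ℕ∞) (fun q => fderiv ℝ F q) := hF.fderiv_right (by simp)
  have hW₁c : ContDiff ℝ (⊤ : ℕ∞) W₁ := hFc.clm_apply contDiff_const
  have hW₂c : ContDiff ℝ (⊤ : ℕ∞) W₂ := hFc.clm_apply contDiff_const
  set W₁₁ : ℝ × ℝ → ℝ := fun q => fderiv ℝ W₁ q (1, 0) with hW₁₁def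
  have hW₁₁c : ContDiff ℝ (⊤ : ℕ∞) W₁₁ := (hW₁c.fderiv_right (by simp)).clm_apply contDiff_const
  have hDx : ∀ x t : ℝ, HasDerivAt (fun y => v y t) (W₁ (x, t)) x := by
    intro x t
    have h1 : HasFDerivAt F (fderiv ℝ F (x, t)) (x, t) :=
      (hF.differentiable (by simp) _).hasFDerivAt
    have h2 : HasDerivAt (fun y : ℝ => ((y, t) : ℝ × ℝ)) ((1 : ℝ), (0 : ℝ)) x :=
      (hasDerivAt_id x).prodMk (hasDerivAt_const x t)
    exact h1.comp_hasDerivAt x h2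
  have hDt : ∀ x t : ℝ, HasDerivAt (fun s => v x s) (W₂ (x, t)) t := by
    intro x t
    have h1 : HasFDerivAt F (fderiv ℝ F (x, t)) (x, t) :=
      (hF.differentiable (by simp) _).hasFDerivAt
    have h2 : HasDerivAt (fun s : ℝ => ((x, s) : ℝ × ℝ)) ((0 : ℝ), (1 : ℝ)) t :=
      (hasDerivAt_const t x).prodMk (hasDerivAt_id t)
    exact h1.comp_hasDerivAt t h2
  have hDxx : ∀ x t : ℝ, HasDerivAt (fun y => W₁ (y, t)) (W₁₁ (x, t)) x := by
    intro x t
    have h1 : HasFDerivAt W₁ (fderiv ℝ W₁ (x, t)) (x, t) :=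
      (hW₁c.differentiable (by simp) _).hasFDerivAt
    have h2 : HasDerivAt (fun y : ℝ => ((y, t) : ℝ × ℝ)) ((1 : ℝ), (0 : ℝ)) x :=
      (hasDerivAt_id x).prodMk (hasDerivAt_const x t)
    exact h1.comp_hasDerivAt x h2
  have hderiv_x : ∀ x t : ℝ, deriv (fun y => v y t) x = W₁ (x, t) := fun x t => (hDx x t).deriv
  have hderiv_t : ∀ x t : ℝ, deriv (fun s => v x s) t = W₂ (x, t) := fun x t => (hDt x t).deriv
  have hderiv_xx : ∀ x t : ℝ, deriv (fun y => deriv (fun z => v z t) y) x = W₁₁ (x, t) := by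
    intro x t
    have h : (fun y => deriv (fun z => v z t) y) = fun y => W₁ (y, t) :=
      funext fun y => hderiv_x y t
    rw [h]
    exact (hDxx x t).deriv
  -- rewritten PDE and BC
  have heq' : ∀ x ∈ Ioo (-L₁) 0, ∀ t ∈ Ioo 0 T,
      W₂ (x, t) - ν * W₁₁ (x, t) + a * W₁ (x, t) + c * v x t = 0 := by
    intro x hx t ht
    have h := heq x hx t ht
    rwa [hderiv_t, hderiv_xx, hderiv_x] at h
  have hright' : ∀ t ∈ Icc 0 T,
      W₂ (0, t) - a * W₁ (0, t) + (a ^ 2 / ν + c) * v 0 t = g t := by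
    intro t ht
    have h := hright t ht
    rwa [hderiv_t, hderiv_x] at h
  -- continuity facts
  have contF : Continuous F := hF.continuous
  have contW₁ : Continuous W₁ := hW₁c.continuous
  have contW₂ : Continuous W₂ := hW₂c.continuous
  have contW₁₁ : Continuous W₁₁ := hW₁₁c.continuous
  have sliceX : ∀ t : ℝ, Continuous fun x : ℝ => ((x, t) : ℝ × ℝ) :=
    fun t => continuous_id.prodMk continuous_const
  have sliceT : ∀ x : ℝ, Continuous fun t : ℝ => ((x, t) : ℝ × ℝ) :=
    fun x => continuous_const.prodMk continuous_id
  have contv : ∀ t : ℝ, Continuous fun x => v x t := fun t => contF.comp (sliceX t)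
  have contvT : ∀ x : ℝ, Continuous fun t => v x t := fun x => contF.comp (sliceT x)
  -- integrability on the rectangle
  have hIntRect : ∀ {f : ℝ × ℝ → ℝ}, Continuous f →
      Integrable f ((volume.restrict (Ioc 0 T)).prod (volume.restrict (Ioc (-L₁) 0))) := by
    intro f hf
    rw [Measure.prod_restrict, ← Measure.volume_eq_prod]
    exact ((hf.continuousOn).integrableOn_compact
      (isCompact_Icc.prod isCompact_Icc)).mono_set
      (prod_mono Ioc_subset_Icc_self Ioc_subset_Icc_self)
  -- time FTC : ∫_0^T v W₂ dt
  have hTFTC : ∀ x : ℝ, (∫ t in Ioc 0 T, v x t * W₂ (x, t)) = (v x T) ^ 2 / 2 - (v x 0) ^ 2 / 2 := by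
    intro x
    rw [← intervalIntegral.integral_of_le hT.le]
    apply intervalIntegral.integral_eq_sub_of_hasDerivAt (f := fun s => (v x s) ^ 2 / 2)
    · intro t _
      have h := ((hDt x t).fun_pow 2).div_const 2
      convert h using 1
      · rfl
      push_cast
      ring
    · exact ((contvT x).mul (contW₂.comp (sliceT x))).intervalIntegrable 0 T
  -- space FTC : ∫_{-L₁}^0 v W₁ dx
  have hXFTC : ∀ t : ℝ, (∫ x in Ioc (-L₁) 0, v x t * W₁ (x, t))
      = (v 0 t) ^ 2 / 2 - (v (-L₁) t) ^ 2 / 2 := by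
    intro t
    rw [← intervalIntegral.integral_of_le hL]
    apply intervalIntegral.integral_eq_sub_of_hasDerivAt (f := fun y => (v y t) ^ 2 / 2)
    · intro x _
      have h := ((hDx x t).fun_pow 2).div_const 2
      convert h using 1
      · rfl
      push_cast
      ring
    · exact ((contv t).mul (contW₁.comp (sliceX t))).intervalIntegrable _ _
  -- integration by parts : ∫ v W₁₁ dx
  have hParts : ∀ t : ℝ, (∫ x in Ioc (-L₁) 0, v x t * W₁₁ (x, t))
      = v 0 t * W₁ (0, t) - v (-L₁) t * W₁ (-L₁, t)
        - ∫ x in Ioc (-L₁) 0, W₁ (x, t) * W₁ (x, t) := by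
    intro t
    rw [← intervalIntegral.integral_of_le hL, ← intervalIntegral.integral_of_le hL]
    exact intervalIntegral.integral_mul_deriv_eq_deriv_mul
      (fun x _ => hDx x t) (fun x _ => hDxx x t)
      ((contW₁.comp (sliceX t)).intervalIntegrable _ _)
      ((contW₁₁.comp (sliceX t)).intervalIntegrable _ _)
  -- inner spatial identity, for t in the open interval
  have hInner : ∀ t ∈ Ioo 0 T,
      (∫ x in Ioc (-L₁) 0, v x t * W₂ (x, t))
        = ν * (v 0 t * W₁ (0, t)) - a * ((v 0 t) ^ 2 / 2)
          - ν * (∫ x in Ioc (-L₁) 0, W₁ (x, t) * W₁ (x, t))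
          - c * (∫ x in Ioc (-L₁) 0, (v x t) ^ 2) := by
    intro t ht
    have htIcc : t ∈ Icc 0 T := ⟨ht.1.le, ht.2.le⟩
    have step1 : (∫ x in Ioc (-L₁) 0, v x t * W₂ (x, t))
        = ∫ x in Ioc (-L₁) 0,
            (ν * (v x t * W₁₁ (x, t)) - a * (v x t * W₁ (x, t)) - c * (v x t) ^ 2) := by
      rw [integral_Ioc_eq_integral_Ioo, integral_Ioc_eq_integral_Ioo]
      apply setIntegral_congr_fun measurableSet_Ioo
      intro x hx
      have h := heq' x hx t ht
      have h2 : W₂ (x, t) = ν * W₁₁ (x, t) - a * W₁ (x, t) - c * v x t := by linarith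
      show v x t * W₂ (x, t)
        = ν * (v x t * W₁₁ (x, t)) - a * (v x t * W₁ (x, t)) - c * (v x t) ^ 2
      rw [h2]; ring
    have i1 : IntegrableOn (fun x => ν * (v x t * W₁₁ (x, t))) (Ioc (-L₁) 0) :=
      (continuous_const.mul ((contv t).mul (contW₁₁.comp (sliceX t)))).integrableOn_Ioc
    have i2 : IntegrableOn (fun x => a * (v x t * W₁ (x, t))) (Ioc (-L₁) 0) :=
      (continuous_const.mul ((contv t).mul (contW₁.comp (sliceX t)))).integrableOn_Ioc
    have i3 : IntegrableOn (fun x => c * (v x t) ^ 2) (Ioc (-L₁) 0) :=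
      (continuous_const.mul ((contv t).pow 2)).integrableOn_Ioc
    have i12 : IntegrableOn
        (fun x => ν * (v x t * W₁₁ (x, t)) - a * (v x t * W₁ (x, t))) (Ioc (-L₁) 0) := i1.sub i2
    rw [step1, integral_sub i12 i3, integral_sub i1 i2,
      integral_const_mul, integral_const_mul, integral_const_mul,
      hParts t, hXFTC t, hleft t htIcc]
    ring
  -- double integral of v * W₂, computed two ways
  have hswap : (∫ t in Ioc 0 T, ∫ x in Ioc (-L₁) 0, v x t * W₂ (x, t))
      = ∫ x in Ioc (-L₁) 0, ∫ t in Ioc 0 T, v x t * W₂ (x, t) := by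
    apply integral_integral_swap (f := fun t x => v x t * W₂ (x, t))
    apply hIntRect
    exact ((contF.comp (continuous_snd.prodMk continuous_fst)).mul
      (contW₂.comp (continuous_snd.prodMk continuous_fst)))
  have hA : (∫ t in Ioc 0 T, ∫ x in Ioc (-L₁) 0, v x t * W₂ (x, t))
      = ∫ x in Ioc (-L₁) 0, (v x T) ^ 2 / 2 := by
    rw [hswap]
    apply setIntegral_congr_fun measurableSet_Ioc
    intro x hx
    have hxIcc : x ∈ Icc (-L₁) 0 := ⟨hx.1.le, hx.2⟩
    show (∫ t in Ioc 0 T, v x t * W₂ (x, t)) = (v x T) ^ 2 / 2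
    rw [hTFTC x, hinit x hxIcc]
    ring
  -- integrabilities in t
  have iBd : IntegrableOn (fun t => ν * (v 0 t * W₁ (0, t))) (Ioc 0 T) :=
    (continuous_const.mul ((contvT 0).mul (contW₁.comp (sliceT 0)))).integrableOn_Ioc
  have iJh : IntegrableOn (fun t => a * ((v 0 t) ^ 2 / 2)) (Ioc 0 T) :=
    (continuous_const.mul (((contvT 0).pow 2).div_const 2)).integrableOn_Ioc
  have iQ : IntegrableOn (fun t => ∫ x in Ioc (-L₁) 0, W₁ (x, t) * W₁ (x, t)) (Ioc 0 T) := by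
    have := (hIntRect (f := fun p : ℝ × ℝ =>
      W₁ (p.2, p.1) * W₁ (p.2, p.1))
      ((contW₁.comp (continuous_snd.prodMk continuous_fst)).mul
        (contW₁.comp (continuous_snd.prodMk continuous_fst)))).integral_prod_left
    exact this
  have iV : IntegrableOn (fun t => ∫ x in Ioc (-L₁) 0, (v x t) ^ 2) (Ioc 0 T) := by
    have := (hIntRect (f := fun p : ℝ × ℝ => (v p.2 p.1) ^ 2)
      ((contF.comp (continuous_snd.prodMk continuous_fst)).pow 2)).integral_prod_left
    exact this
  have iQ' : IntegrableOn (fun t => ν * ∫ x in Ioc (-L₁) 0, W₁ (x, t) * W₁ (x, t)) (Ioc 0 T) :=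
    iQ.const_mul ν
  have iV' : IntegrableOn (fun t => c * ∫ x in Ioc (-L₁) 0, (v x t) ^ 2) (Ioc 0 T) :=
    iV.const_mul c
  -- the splitting of the double integral using hInner
  have hB : (∫ t in Ioc 0 T, ∫ x in Ioc (-L₁) 0, v x t * W₂ (x, t))
      = (∫ t in Ioc 0 T, (ν * (v 0 t * W₁ (0, t)) - a * ((v 0 t) ^ 2 / 2)))
        - ν * (∫ t in Ioc 0 T, ∫ x in Ioc (-L₁) 0, W₁ (x, t) * W₁ (x, t))
        - c * (∫ t in Ioc 0 T, ∫ x in Ioc (-L₁) 0, (v x t) ^ 2) := by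
    have step : (∫ t in Ioc 0 T, ∫ x in Ioc (-L₁) 0, v x t * W₂ (x, t))
        = ∫ t in Ioc 0 T,
            ((ν * (v 0 t * W₁ (0, t)) - a * ((v 0 t) ^ 2 / 2))
              - ν * (∫ x in Ioc (-L₁) 0, W₁ (x, t) * W₁ (x, t))
              - c * (∫ x in Ioc (-L₁) 0, (v x t) ^ 2)) := by
      rw [integral_Ioc_eq_integral_Ioo, integral_Ioc_eq_integral_Ioo]
      apply setIntegral_congr_fun measurableSet_Ioo
      intro t ht
      show (∫ x in Ioc (-L₁) 0, v x t * W₂ (x, t))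
        = (ν * (v 0 t * W₁ (0, t)) - a * ((v 0 t) ^ 2 / 2))
          - ν * (∫ x in Ioc (-L₁) 0, W₁ (x, t) * W₁ (x, t))
          - c * (∫ x in Ioc (-L₁) 0, (v x t) ^ 2)
      rw [hInner t ht]
    have i12 : IntegrableOn
        (fun t => ν * (v 0 t * W₁ (0, t)) - a * ((v 0 t) ^ 2 / 2)) (Ioc 0 T) := iBd.sub iJh
    have i123 : IntegrableOn
        (fun t => (ν * (v 0 t * W₁ (0, t)) - a * ((v 0 t) ^ 2 / 2))
          - ν * ∫ x in Ioc (-L₁) 0, W₁ (x, t) * W₁ (x, t)) (Ioc 0 T) := i12.sub iQ'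
    rw [step, integral_sub i123 iV', integral_sub i12 iQ',
      integral_const_mul, integral_const_mul]
  -- boundary inequality, pointwise in t
  have hbdry : ∀ t ∈ Icc 0 T,
      ν * (v 0 t * W₁ (0, t)) - a * ((v 0 t) ^ 2 / 2)
        ≤ -(ν / |a|) * (v 0 t * W₂ (0, t)) + ν ^ 2 / |a| ^ 3 * (g t) ^ 2 := by
    intro t ht
    have hbc := hright' t ht
    have hne : a ≠ 0 := ne_of_lt ha
    have hνne : ν ≠ 0 := ne_of_gt hν
    have ha' : (0 : ℝ) < -a := neg_pos.2 ha
    have hW₂val : W₂ (0, t) = g t + a * W₁ (0, t) - (a ^ 2 / ν + c) * v 0 t := by linarith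
    rw [habs, hW₂val, ← sub_nonneg]
    have hK : (0 : ℝ) < (-a) ^ 3 * ν := mul_pos (pow_pos ha' 3) hν
    have key : 0 ≤ ν ^ 2 * (g t) ^ 2 - a ^ 2 * ν * (v 0 t) * (g t)
        + (a ^ 4 / 2 + a ^ 2 * ν * c) * (v 0 t) ^ 2 := by
      nlinarith [sq_nonneg (ν * g t - a ^ 2 / 2 * v 0 t),
        mul_nonneg (show (0 : ℝ) ≤ a ^ 4 / 4 + a ^ 2 * ν * c by positivity)
          (sq_nonneg (v 0 t))]
    have expand : (-(ν / -a) * (v 0 t * (g t + a * W₁ (0, t) - (a ^ 2 / ν + c) * v 0 t))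
          + ν ^ 2 / (-a) ^ 3 * (g t) ^ 2
          - (ν * (v 0 t * W₁ (0, t)) - a * ((v 0 t) ^ 2 / 2))) * ((-a) ^ 3 * ν)
        = ν * (ν ^ 2 * (g t) ^ 2 - a ^ 2 * ν * (v 0 t) * (g t)
            + (a ^ 4 / 2 + a ^ 2 * ν * c) * (v 0 t) ^ 2) := by
      field_simp
      ring
    have hprod : 0 ≤ (-(ν / -a) * (v 0 t * (g t + a * W₁ (0, t) - (a ^ 2 / ν + c) * v 0 t))
          + ν ^ 2 / (-a) ^ 3 * (g t) ^ 2
          - (ν * (v 0 t * W₁ (0, t)) - a * ((v 0 t) ^ 2 / 2))) * ((-a) ^ 3 * ν) := by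
      rw [expand]
      exact mul_nonneg hν.le key
    nlinarith [hprod, hK]
  -- integrate the boundary inequality
  have hres : (∫ t in Ioc 0 T, (ν * (v 0 t * W₁ (0, t)) - a * ((v 0 t) ^ 2 / 2)))
      ≤ -(ν / |a|) * ((v 0 T) ^ 2 / 2 - (v 0 0) ^ 2 / 2)
        + ν ^ 2 / |a| ^ 3 * ∫ t in Ioc 0 T, (g t) ^ 2 := by
    have hLHSint : IntegrableOn
        (fun t => ν * (v 0 t * W₁ (0, t)) - a * ((v 0 t) ^ 2 / 2)) (Ioc 0 T) :=
      iBd.sub iJh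
    have hc1 : IntegrableOn (fun t => -(ν / |a|) * (v 0 t * W₂ (0, t))) (Ioc 0 T) :=
      (continuous_const.mul ((contvT 0).mul (contW₂.comp (sliceT 0)))).integrableOn_Ioc
    have hc2 : IntegrableOn (fun t => ν ^ 2 / |a| ^ 3 * (g t) ^ 2) (Ioc 0 T) :=
      hgL2.const_mul _
    calc (∫ t in Ioc 0 T, (ν * (v 0 t * W₁ (0, t)) - a * ((v 0 t) ^ 2 / 2)))
        ≤ ∫ t in Ioc 0 T,
            (-(ν / |a|) * (v 0 t * W₂ (0, t)) + ν ^ 2 / |a| ^ 3 * (g t) ^ 2) := by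
          apply setIntegral_mono_on hLHSint (hc1.add hc2) measurableSet_Ioc
          intro t ht
          exact hbdry t ⟨ht.1.le, ht.2⟩
      _ = -(ν / |a|) * ((v 0 T) ^ 2 / 2 - (v 0 0) ^ 2 / 2)
          + ν ^ 2 / |a| ^ 3 * ∫ t in Ioc 0 T, (g t) ^ 2 := by
          rw [integral_add hc1 hc2, integral_const_mul, integral_const_mul, hTFTC 0]
  -- nonnegativity facts
  have hAnn : 0 ≤ ∫ x in Ioc (-L₁) 0, (v x T) ^ 2 / 2 :=
    setIntegral_nonneg measurableSet_Ioc fun x _ => by positivity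
  have hQnn : 0 ≤ ∫ t in Ioc 0 T, ∫ x in Ioc (-L₁) 0, W₁ (x, t) * W₁ (x, t) := by
    apply setIntegral_nonneg measurableSet_Ioc
    intro t _
    exact setIntegral_nonneg measurableSet_Ioc fun x _ => mul_self_nonneg _
  have hSnn : 0 ≤ ∫ t in Ioc 0 T, ∫ x in Ioc (-L₁) 0, (v x t) ^ 2 := by
    apply setIntegral_nonneg measurableSet_Ioc
    intro t _
    exact setIntegral_nonneg measurableSet_Ioc fun x _ => sq_nonneg _
  have hGnn : 0 ≤ ∫ t in Ioc 0 T, (g t) ^ 2 :=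
    setIntegral_nonneg measurableSet_Ioc fun t _ => sq_nonneg _
  have habspos : 0 < |a| := abs_pos.2 (ne_of_lt ha)
  have hv0T : 0 ≤ ν / |a| * ((v 0 T) ^ 2 / 2) := by positivity
  have hinit0 : v 0 0 = 0 := hinit 0 ⟨hL, le_refl 0⟩
  -- main estimate
  have main : c * (∫ t in Ioc 0 T, ∫ x in Ioc (-L₁) 0, (v x t) ^ 2)
      ≤ ν ^ 2 / |a| ^ 3 * ∫ t in Ioc 0 T, (g t) ^ 2 := by
    have h1 := hA
    have h2 := hB
    rw [hinit0] at hres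
    have hQν : 0 ≤ ν * ∫ t in Ioc 0 T, ∫ x in Ioc (-L₁) 0, W₁ (x, t) * W₁ (x, t) :=
      mul_nonneg hν.le hQnn
    nlinarith [hv0T]
  refine ⟨main, ?_⟩
  -- second inequality
  have h1 : (∫ t in Ioc 0 T, ∫ x in Ioc (-L₁) 0, (v x t) ^ 2)
      ≤ ν ^ 2 / (c * |a| ^ 3) * ∫ t in Ioc 0 T, (g t) ^ 2 := by
    have hkey : c * (∫ t in Ioc 0 T, ∫ x in Ioc (-L₁) 0, (v x t) ^ 2)
        ≤ c * (ν ^ 2 / (c * |a| ^ 3) * ∫ t in Ioc 0 T, (g t) ^ 2) := by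
      have he : c * (ν ^ 2 / (c * |a| ^ 3) * ∫ t in Ioc 0 T, (g t) ^ 2)
          = ν ^ 2 / |a| ^ 3 * ∫ t in Ioc 0 T, (g t) ^ 2 := by
        field_simp
      rw [he]
      exact main
    exact le_of_mul_le_mul_left hkey hc
  calc Real.sqrt (∫ t in Ioc 0 T, ∫ x in Ioc (-L₁) 0, (v x t) ^ 2)
      ≤ Real.sqrt (ν ^ 2 / (c * |a| ^ 3) * ∫ t in Ioc 0 T, (g t) ^ 2) :=
        Real.sqrt_le_sqrt h1
    _ = Real.sqrt (ν ^ 2 / (c * |a| ^ 3)) * Real.sqrt (∫ t in Ioc 0 T, (g t) ^ 2) :=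
        Real.sqrt_mul (by positivity) _
    _ = (ν / Real.sqrt (c * |a| ^ 3)) * Real.sqrt (∫ t in Ioc 0 T, (g t) ^ 2) := by
        rw [Real.sqrt_div (sq_nonneg ν), Real.sqrt_sq hν.le]
    _ = 1 / Real.sqrt (c * |a| ^ 3) * ν * Real.sqrt (∫ t in Ioc 0 T, (g t) ^ 2) := by
        ring
end

section
/- Let a > 0, ν > 0, L₁, L₂ > 0 with e^{−a(L₁+L₂)/ν} < 1/2, and let λ± ∈ ℂ satisfy Re λ₊ > 0, Re λ₋ < 0, |λ₋| ≤ |λ₊|, Re(λ₊ − λ₋) ≥ a/ν, |λ₊| ≥ a/ν. Then for every x ∈ [−L₁, L₂], | (e^{λ₊(x+L₁)} − e^{λ₋(x+L₁)}) / (ν λ₊² e^{λ₊(L₂+L₁)} − ν λ₋² e^{λ₋(L₂+L₁)}) | ≤ (4ν/a²) e^{Re λ₊ (x − L₂)}. -/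
/-!
Bound the numerator by the triangle inequality, `2 e^{Re λ₊ (x+L₁)}`, and the denominator from
below by the reverse triangle inequality: the gap `Re(λ₊ − λ₋) ≥ a/ν` makes the `λ₋`-term at most
`e^{−a(L₁+L₂)/ν} < 1/2` times the `λ₊`-term, whose modulus is at least `(a²/ν) e^{Re λ₊ (L₂+L₁)}`.
-/

open Complex

lemma norm_exp_sub_exp_le_two_mul {z w : ℂ} (h : w.re ≤ z.re) :
    ‖exp z - exp w‖ ≤ 2 * Real.exp z.re :=
  calc ‖exp z - exp w‖ ≤ ‖exp z‖ + ‖exp w‖ := norm_sub_le _ _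
    _ = Real.exp z.re + Real.exp w.re := by rw [norm_exp, norm_exp]
    _ ≤ 2 * Real.exp z.re := by linarith [Real.exp_le_exp.mpr h]

lemma norm_mul_exp_div_two_le_norm_sub {A B z w : ℂ} {δ : ℝ} (hB : ‖B‖ ≤ ‖A‖)
    (hre : w.re ≤ z.re - δ) (hδ : Real.exp (-δ) ≤ 1 / 2) :
    ‖A‖ * Real.exp z.re / 2 ≤ ‖A * exp z - B * exp w‖ := by
  have hsmall : ‖B * exp w‖ ≤ ‖A‖ * Real.exp z.re / 2 :=
    calc ‖B * exp w‖ = ‖B‖ * Real.exp w.re := by rw [norm_mul, norm_exp]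
      _ ≤ ‖A‖ * (Real.exp z.re * Real.exp (-δ)) := by
          rw [← Real.exp_add, ← sub_eq_add_neg]
          gcongr
      _ ≤ ‖A‖ * (Real.exp z.re * (1 / 2)) := by gcongr
      _ = ‖A‖ * Real.exp z.re / 2 := by ring
  have hlarge : ‖A * exp z‖ = ‖A‖ * Real.exp z.re := by rw [norm_mul, norm_exp]
  linarith [norm_sub_norm_le (A * exp z) (B * exp w)]

theorem pointwise_multiplier_bound_general (a ν L₁ L₂ : ℝ) (lamP lamM : ℂ)
    (ha : 0 < a) (hν : 0 < ν)
    (hsmall : Real.exp (-a * (L₁ + L₂) / ν) < 1 / 2)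
    (habs : ‖lamM‖ ≤ ‖lamP‖)
    (hgap : a / ν ≤ (lamP - lamM).re)
    (habsP : a / ν ≤ ‖lamP‖) :
    ∀ x ∈ Set.Icc (-L₁) L₂,
      ‖((Complex.exp (lamP * ((x : ℂ) + L₁)) -
          Complex.exp (lamM * ((x : ℂ) + L₁))) /
        ((ν : ℂ) * lamP ^ 2 * Complex.exp (lamP * ((L₂ : ℂ) + L₁)) -
          (ν : ℂ) * lamM ^ 2 * Complex.exp (lamM * ((L₂ : ℂ) + L₁))))‖ ≤
      4 * ν / a ^ 2 * Real.exp (lamP.re * (x - L₂)) := by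
  rintro x ⟨hxl, hxu⟩
  have hgap' : lamM.re ≤ lamP.re - a / ν := by rw [sub_re] at hgap; linarith
  have hν' : ‖(ν : ℂ)‖ = ν := by rw [norm_real, Real.norm_of_nonneg hν.le]
  have hnum := norm_exp_sub_exp_le_two_mul (z := lamP * ((x + L₁ : ℝ) : ℂ))
    (w := lamM * ((x + L₁ : ℝ) : ℂ)) (by
      simp only [re_mul_ofReal]; nlinarith [div_pos ha hν])
  have hden := norm_mul_exp_div_two_le_norm_sub (A := ν * lamP ^ 2) (B := ν * lamM ^ 2)
    (z := lamP * ((L₂ + L₁ : ℝ) : ℂ)) (w := lamM * ((L₂ + L₁ : ℝ) : ℂ))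
    (δ := a / ν * (L₂ + L₁)) (by simp only [norm_mul, norm_pow]; gcongr) (by
      simp only [re_mul_ofReal]; nlinarith) (by
      rw [show -(a / ν * (L₂ + L₁)) = -a * (L₁ + L₂) / ν by ring]; exact hsmall.le)
  have hA : a ^ 2 / ν ≤ ‖(ν : ℂ) * lamP ^ 2‖ := by
    rw [norm_mul, norm_pow, hν', ← div_le_iff₀' hν, div_div, ← sq, ← div_pow]
    gcongr
  simp only [re_mul_ofReal] at hnum hden
  push_cast at hnum hden
  rw [norm_div]
  calc _ ≤ 2 * Real.exp (lamP.re * (x + L₁)) /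
        (a ^ 2 / ν * Real.exp (lamP.re * (L₂ + L₁)) / 2) := by
        gcongr
        exact le_trans (by gcongr) hden
    _ = 4 * ν / a ^ 2 * Real.exp (lamP.re * (x - L₂)) := by
        rw [show lamP.re * (x - L₂) = lamP.re * (x + L₁) - lamP.re * (L₂ + L₁) by ring,
          Real.exp_sub]
        field_simp
        ring

/-- Pointwise multiplier bound at the heart of Lemma 3.2:
`|(e^{λ₊(x+L₁)} − e^{λ₋(x+L₁)})/(νλ₊²e^{λ₊(L₂+L₁)} − νλ₋²e^{λ₋(L₂+L₁)})|
  ≤ (4ν/a²) e^{Re λ₊ (x−L₂)}`. -/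
theorem pointwise_multiplier_bound (a ν L₁ L₂ : ℝ) (lamP lamM : ℂ)
    (ha : 0 < a) (hν : 0 < ν) (hL₁ : 0 < L₁) (hL₂ : 0 < L₂)
    (hsmall : Real.exp (-a * (L₁ + L₂) / ν) < 1 / 2)
    (hrePpos : 0 < lamP.re) (hreMneg : lamM.re < 0)
    (habs : ‖lamM‖ ≤ ‖lamP‖)
    (hgap : a / ν ≤ (lamP - lamM).re)
    (habsP : a / ν ≤ ‖lamP‖) :
    ∀ x ∈ Set.Icc (-L₁) L₂,
      ‖((Complex.exp (lamP * ((x : ℂ) + L₁)) -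
          Complex.exp (lamM * ((x : ℂ) + L₁))) /
        ((ν : ℂ) * lamP ^ 2 * Complex.exp (lamP * ((L₂ : ℂ) + L₁)) -
          (ν : ℂ) * lamM ^ 2 * Complex.exp (lamM * ((L₂ : ℂ) + L₁))))‖ ≤
      4 * ν / a ^ 2 * Real.exp (lamP.re * (x - L₂)) :=
  pointwise_multiplier_bound_general a ν L₁ L₂ lamP lamM ha hν hsmall habs hgap habsP
end

section
/- Let a > 0, c > 0, ν > 0 and let u, U be smooth on (−L₁,L₂)×(0,T) with ∂_t U + a ∂_x U + c U = f, and ∂_t u − ν ∂_x² u + a ∂_x u + c u = f, sharing the same initial data h and left boundary data g₁, with (∂_t + a∂_x + c)u(L₂,·) = 0 = f(L₂,·). Then w = u − U solves ∂_t w − ν ∂_x² w + a ∂_x w + c w = ν ∂_x² U with w(−L₁,·) = 0, (∂_t + a∂_x + c)w(L₂,·) = 0, w(·,0) = 0, and consequently c‖w‖²_{L²_{x,t}} + a‖w(L₂,·)‖²_{L²_t} + 2ν‖∂_x w‖²_{L²_{x,t}} ≤ (ν²/c) ‖∂_x² U‖²_{L²_{x,t}}. -/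
open Set MeasureTheory

noncomputable section
namespace VID

def px (f : ℝ × ℝ → ℝ) : ℝ × ℝ → ℝ := fun q => fderiv ℝ f q (1, 0)
def pt (f : ℝ × ℝ → ℝ) : ℝ × ℝ → ℝ := fun q => fderiv ℝ f q (0, 1)

lemma contDiff_px {f : ℝ × ℝ → ℝ} (hf : ContDiff ℝ (⊤ : ℕ∞) f) : ContDiff ℝ (⊤ : ℕ∞) (px f) :=
  (hf.fderiv_right (by simp)).clm_apply contDiff_const

lemma contDiff_pt {f : ℝ × ℝ → ℝ} (hf : ContDiff ℝ (⊤ : ℕ∞) f) : ContDiff ℝ (⊤ : ℕ∞) (pt f) :=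
  (hf.fderiv_right (by simp)).clm_apply contDiff_const

lemma hasDerivAt_px {f : ℝ × ℝ → ℝ} (hf : ContDiff ℝ (⊤ : ℕ∞) f) (x t : ℝ) :
    HasDerivAt (fun y => f (y, t)) (px f (x, t)) x := by
  have h1 : HasFDerivAt f (fderiv ℝ f (x, t)) (x, t) :=
    ((hf.differentiable (by simp)) (x, t)).hasFDerivAt
  have h2 : HasDerivAt (fun y : ℝ => (y, t)) ((1 : ℝ), (0 : ℝ)) x :=
    HasDerivAt.prodMk (hasDerivAt_id x) (hasDerivAt_const x t)
  exact h1.comp_hasDerivAt x h2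

lemma hasDerivAt_pt {f : ℝ × ℝ → ℝ} (hf : ContDiff ℝ (⊤ : ℕ∞) f) (x t : ℝ) :
    HasDerivAt (fun s => f (x, s)) (pt f (x, t)) t := by
  have h1 : HasFDerivAt f (fderiv ℝ f (x, t)) (x, t) :=
    ((hf.differentiable (by simp)) (x, t)).hasFDerivAt
  have h2 : HasDerivAt (fun s : ℝ => (x, s)) ((0 : ℝ), (1 : ℝ)) t :=
    HasDerivAt.prodMk (hasDerivAt_const t x) (hasDerivAt_id t)
  exact h1.comp_hasDerivAt t h2

lemma px_sub {f g : ℝ × ℝ → ℝ} (hf : ContDiff ℝ (⊤ : ℕ∞) f) (hg : ContDiff ℝ (⊤ : ℕ∞) g) (q : ℝ × ℝ) :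
    px (fun p => f p - g p) q = px f q - px g q := by
  simp [px, fderiv_fun_sub ((hf.differentiable (by simp)) q) ((hg.differentiable (by simp)) q)]

lemma pt_sub {f g : ℝ × ℝ → ℝ} (hf : ContDiff ℝ (⊤ : ℕ∞) f) (hg : ContDiff ℝ (⊤ : ℕ∞) g) (q : ℝ × ℝ) :
    pt (fun p => f p - g p) q = pt f q - pt g q := by
  simp [pt, fderiv_fun_sub ((hf.differentiable (by simp)) q) ((hg.differentiable (by simp)) q)]

/-- FTC over `Ioc`. -/
lemma integral_Ioc_deriv {g g' : ℝ → ℝ} (hg : ∀ x, HasDerivAt g (g' x) x)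
    (hg' : Continuous g') {a b : ℝ} (hab : a ≤ b) :
    ∫ x in Ioc a b, g' x = g b - g a := by
  rw [← intervalIntegral.integral_of_le hab]
  exact intervalIntegral.integral_eq_sub_of_hasDerivAt (fun x _ => hg x)
    (hg'.intervalIntegrable a b)

lemma integrable_prod_swap {f : ℝ × ℝ → ℝ} (hf : Continuous f) (a b c d : ℝ) :
    Integrable (Function.uncurry fun t x => f (x, t))
      ((volume.restrict (Ioc c d)).prod (volume.restrict (Ioc a b))) := by
  rw [Measure.prod_restrict]
  have h : IntegrableOn (Function.uncurry fun t x => f (x, t)) (Icc c d ×ˢ Icc a b) volume :=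
    (hf.comp continuous_swap).continuousOn.integrableOn_compact
      (isCompact_Icc.prod isCompact_Icc)
  exact h.mono_set (prod_mono Ioc_subset_Icc_self Ioc_subset_Icc_self)

lemma J_swap {f : ℝ × ℝ → ℝ} (hf : Continuous f) (a b c d : ℝ) :
    (∫ t in Ioc c d, ∫ x in Ioc a b, f (x, t)) = ∫ x in Ioc a b, ∫ t in Ioc c d, f (x, t) :=
  integral_integral_swap (integrable_prod_swap hf a b c d)

lemma J_add {f g : ℝ × ℝ → ℝ} (hf : Continuous f) (hg : Continuous g) (a b c d : ℝ) :
    (∫ t in Ioc c d, ∫ x in Ioc a b, (f (x, t) + g (x, t))) =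
      (∫ t in Ioc c d, ∫ x in Ioc a b, f (x, t)) +
      (∫ t in Ioc c d, ∫ x in Ioc a b, g (x, t)) := by
  have h1 : ∀ t : ℝ, (∫ x in Ioc a b, (f (x, t) + g (x, t))) =
      (∫ x in Ioc a b, f (x, t)) + ∫ x in Ioc a b, g (x, t) := fun t =>
    integral_add ((hf.comp (Continuous.prodMk_left t)).integrableOn_Ioc)
      ((hg.comp (Continuous.prodMk_left t)).integrableOn_Ioc)
  simp_rw [h1]
  exact integral_add ((integrable_prod_swap hf a b c d).integral_prod_left)
    ((integrable_prod_swap hg a b c d).integral_prod_left)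

lemma J_sub {f g : ℝ × ℝ → ℝ} (hf : Continuous f) (hg : Continuous g) (a b c d : ℝ) :
    (∫ t in Ioc c d, ∫ x in Ioc a b, (f (x, t) - g (x, t))) =
      (∫ t in Ioc c d, ∫ x in Ioc a b, f (x, t)) -
      (∫ t in Ioc c d, ∫ x in Ioc a b, g (x, t)) := by
  have h1 : ∀ t : ℝ, (∫ x in Ioc a b, (f (x, t) - g (x, t))) =
      (∫ x in Ioc a b, f (x, t)) - ∫ x in Ioc a b, g (x, t) := fun t =>
    integral_sub ((hf.comp (Continuous.prodMk_left t)).integrableOn_Ioc)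
      ((hg.comp (Continuous.prodMk_left t)).integrableOn_Ioc)
  simp_rw [h1]
  exact integral_sub ((integrable_prod_swap hf a b c d).integral_prod_left)
    ((integrable_prod_swap hg a b c d).integral_prod_left)

lemma J_smul (r : ℝ) (f : ℝ × ℝ → ℝ) (a b c d : ℝ) :
    (∫ t in Ioc c d, ∫ x in Ioc a b, r * f (x, t)) =
      r * ∫ t in Ioc c d, ∫ x in Ioc a b, f (x, t) := by
  simp_rw [integral_const_mul]

lemma J_nonneg {f : ℝ × ℝ → ℝ} (h : ∀ q, 0 ≤ f q) (a b c d : ℝ) :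
    0 ≤ ∫ t in Ioc c d, ∫ x in Ioc a b, f (x, t) :=
  integral_nonneg fun t => integral_nonneg fun x => h (x, t)


lemma J_combo2 (r1 r2 r3 : ℝ) {f g h : ℝ × ℝ → ℝ} (hf : Continuous f) (hg : Continuous g)
    (hh : Continuous h) (a b c d : ℝ) :
    (∫ t in Ioc c d, ∫ x in Ioc a b, (r1 * f (x, t) + r2 * g (x, t) - r3 * h (x, t))) =
      r1 * (∫ t in Ioc c d, ∫ x in Ioc a b, f (x, t)) +
      r2 * (∫ t in Ioc c d, ∫ x in Ioc a b, g (x, t)) -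
      r3 * (∫ t in Ioc c d, ∫ x in Ioc a b, h (x, t)) := by
  have h1 : ∀ t : ℝ, (∫ x in Ioc a b, (r1 * f (x, t) + r2 * g (x, t) - r3 * h (x, t))) =
      r1 * (∫ x in Ioc a b, f (x, t)) + r2 * (∫ x in Ioc a b, g (x, t)) -
        r3 * (∫ x in Ioc a b, h (x, t)) := by
    intro t
    have if1 : IntegrableOn (fun x => r1 * f (x, t)) (Ioc a b) volume :=
      (continuous_const.mul (hf.comp (Continuous.prodMk_left t))).integrableOn_Ioc
    have if2 : IntegrableOn (fun x => r2 * g (x, t)) (Ioc a b) volume :=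
      (continuous_const.mul (hg.comp (Continuous.prodMk_left t))).integrableOn_Ioc
    have if3 : IntegrableOn (fun x => r3 * h (x, t)) (Ioc a b) volume :=
      (continuous_const.mul (hh.comp (Continuous.prodMk_left t))).integrableOn_Ioc
    have if12 : IntegrableOn (fun x => r1 * f (x, t) + r2 * g (x, t)) (Ioc a b) volume :=
      if1.add if2
    rw [integral_sub if12 if3, integral_add if1 if2, integral_const_mul,
      integral_const_mul, integral_const_mul]
  simp_rw [h1]
  have of1 : Integrable (fun t => r1 * ∫ x in Ioc a b, f (x, t)) (volume.restrict (Ioc c d)) :=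
    ((integrable_prod_swap hf a b c d).integral_prod_left).const_mul r1
  have of2 : Integrable (fun t => r2 * ∫ x in Ioc a b, g (x, t)) (volume.restrict (Ioc c d)) :=
    ((integrable_prod_swap hg a b c d).integral_prod_left).const_mul r2
  have of3 : Integrable (fun t => r3 * ∫ x in Ioc a b, h (x, t)) (volume.restrict (Ioc c d)) :=
    ((integrable_prod_swap hh a b c d).integral_prod_left).const_mul r3
  have of12 : Integrable (fun t => r1 * (∫ x in Ioc a b, f (x, t)) +
      r2 * ∫ x in Ioc a b, g (x, t)) (volume.restrict (Ioc c d)) := of1.add of2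
  rw [integral_sub of12 of3, integral_add of1 of2, integral_const_mul,
    integral_const_mul, integral_const_mul]

lemma J_combo {p q : ℝ × ℝ → ℝ} (r1 r2 r3 : ℝ) {f g h : ℝ × ℝ → ℝ}
    (hp : Continuous p) (hq : Continuous q) (hf : Continuous f) (hg : Continuous g)
    (hh : Continuous h) (a b c d : ℝ) :
    (∫ t in Ioc c d, ∫ x in Ioc a b,
        (p (x, t) + q (x, t) + (r1 * f (x, t) + r2 * g (x, t) - r3 * h (x, t)))) =
      (∫ t in Ioc c d, ∫ x in Ioc a b, p (x, t)) +
      (∫ t in Ioc c d, ∫ x in Ioc a b, q (x, t)) +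
      (r1 * (∫ t in Ioc c d, ∫ x in Ioc a b, f (x, t)) +
        r2 * (∫ t in Ioc c d, ∫ x in Ioc a b, g (x, t)) -
        r3 * (∫ t in Ioc c d, ∫ x in Ioc a b, h (x, t))) := by
  have hcombo : Continuous (fun z : ℝ × ℝ => r1 * f z + r2 * g z - r3 * h z) :=
    ((continuous_const.mul hf).add (continuous_const.mul hg)).sub (continuous_const.mul hh)
  have h1 := J_add (f := fun z => p z + q z) (g := fun z => r1 * f z + r2 * g z - r3 * h z)
    (hp.add hq) hcombo a b c d
  have h2 := J_add hp hq a b c d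
  have h3 := J_combo2 r1 r2 r3 hf hg hh a b c d
  calc (∫ t in Ioc c d, ∫ x in Ioc a b,
        (p (x, t) + q (x, t) + (r1 * f (x, t) + r2 * g (x, t) - r3 * h (x, t))))
      = (∫ t in Ioc c d, ∫ x in Ioc a b, (p (x, t) + q (x, t))) +
        (∫ t in Ioc c d, ∫ x in Ioc a b, (r1 * f (x, t) + r2 * g (x, t) - r3 * h (x, t))) := h1
    _ = _ := by rw [h2, h3]

end VID
/-- The viscous/inviscid difference `w = u − U` solves the error equation with
right-hand side `ν∂_x²U`, zero initial and left boundary data and homogeneous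
absorbing condition at `x = L₂`, and satisfies the corresponding energy
estimate `c‖w‖² + a‖w(L₂,·)‖² + 2ν‖∂_x w‖² ≤ (ν²/c)‖∂_x²U‖²`. -/
theorem viscous_inviscid_difference (a c ν L₁ L₂ T : ℝ)
    (ha : 0 < a) (hc : 0 < c) (hν : 0 < ν) (hL₁ : 0 < L₁) (hL₂ : 0 < L₂) (hT : 0 < T)
    (u U f : ℝ → ℝ → ℝ)
    (hu : ContDiff ℝ (⊤ : ℕ∞) (fun q : ℝ × ℝ => u q.1 q.2))
    (hU : ContDiff ℝ (⊤ : ℕ∞) (fun q : ℝ × ℝ => U q.1 q.2))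
    (heqU : ∀ x ∈ Icc (-L₁) L₂, ∀ t ∈ Icc 0 T,
      deriv (fun s => U x s) t + a * deriv (fun y => U y t) x + c * U x t = f x t)
    (hequ : ∀ x ∈ Icc (-L₁) L₂, ∀ t ∈ Icc 0 T,
      deriv (fun s => u x s) t - ν * deriv (fun y => deriv (fun z => u z t) y) x +
        a * deriv (fun y => u y t) x + c * u x t = f x t)
    (hinit : ∀ x ∈ Icc (-L₁) L₂, u x 0 = U x 0)
    (hleft : ∀ t ∈ Icc 0 T, u (-L₁) t = U (-L₁) t)
    (habs : ∀ t ∈ Icc 0 T,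
      deriv (fun s => u L₂ s) t + a * deriv (fun y => u y t) L₂ + c * u L₂ t = 0)
    (hfR : ∀ t ∈ Icc 0 T, f L₂ t = 0) :
    let w : ℝ → ℝ → ℝ := fun x t => u x t - U x t
    (∀ x ∈ Icc (-L₁) L₂, ∀ t ∈ Icc 0 T,
      deriv (fun s => w x s) t - ν * deriv (fun y => deriv (fun z => w z t) y) x +
        a * deriv (fun y => w y t) x + c * w x t =
        ν * deriv (fun y => deriv (fun z => U z t) y) x) ∧
    (∀ t ∈ Icc 0 T, w (-L₁) t = 0) ∧
    (∀ t ∈ Icc 0 T,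
      deriv (fun s => w L₂ s) t + a * deriv (fun y => w y t) L₂ + c * w L₂ t = 0) ∧
    (∀ x ∈ Icc (-L₁) L₂, w x 0 = 0) ∧
    c * (∫ t in Ioc 0 T, ∫ x in Ioc (-L₁) L₂, (w x t) ^ 2) +
      a * (∫ t in Ioc 0 T, (w L₂ t) ^ 2) +
      2 * ν * (∫ t in Ioc 0 T, ∫ x in Ioc (-L₁) L₂, (deriv (fun y => w y t) x) ^ 2) ≤
    (ν ^ 2 / c) * (∫ t in Ioc 0 T, ∫ x in Ioc (-L₁) L₂,
        (deriv (fun y => deriv (fun z => U z t) y) x) ^ 2) := by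
  intro w
  set uq : ℝ × ℝ → ℝ := fun q => u q.1 q.2 with huqd
  set Uq : ℝ × ℝ → ℝ := fun q => U q.1 q.2 with hUqd
  set wq : ℝ × ℝ → ℝ := fun q => uq q - Uq q with hwqd
  have hwC : ContDiff ℝ (⊤ : ℕ∞) wq := hu.sub hU
  -- first-order derivative identities
  have du1 : ∀ x t : ℝ, deriv (fun y => u y t) x = VID.px uq (x, t) :=
    fun x t => (VID.hasDerivAt_px hu x t).deriv
  have du2 : ∀ x t : ℝ, deriv (fun s => u x s) t = VID.pt uq (x, t) :=
    fun x t => (VID.hasDerivAt_pt hu x t).deriv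
  have dU1 : ∀ x t : ℝ, deriv (fun y => U y t) x = VID.px Uq (x, t) :=
    fun x t => (VID.hasDerivAt_px hU x t).deriv
  have dU2 : ∀ x t : ℝ, deriv (fun s => U x s) t = VID.pt Uq (x, t) :=
    fun x t => (VID.hasDerivAt_pt hU x t).deriv
  have dW1 : ∀ x t : ℝ, deriv (fun y => w y t) x = VID.px wq (x, t) :=
    fun x t => (VID.hasDerivAt_px hwC x t).deriv
  have dW2 : ∀ x t : ℝ, deriv (fun s => w x s) t = VID.pt wq (x, t) :=
    fun x t => (VID.hasDerivAt_pt hwC x t).deriv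
  -- second-order derivative identities
  have du3 : ∀ x t : ℝ, deriv (fun y => deriv (fun z => u z t) y) x
      = VID.px (VID.px uq) (x, t) := by
    intro x t
    have h : (fun y => deriv (fun z => u z t) y) = fun y => VID.px uq (y, t) :=
      funext fun y => du1 y t
    rw [h]
    exact (VID.hasDerivAt_px (VID.contDiff_px hu) x t).deriv
  have dU3 : ∀ x t : ℝ, deriv (fun y => deriv (fun z => U z t) y) x
      = VID.px (VID.px Uq) (x, t) := by
    intro x t
    have h : (fun y => deriv (fun z => U z t) y) = fun y => VID.px Uq (y, t) :=
      funext fun y => dU1 y t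
    rw [h]
    exact (VID.hasDerivAt_px (VID.contDiff_px hU) x t).deriv
  have dW3 : ∀ x t : ℝ, deriv (fun y => deriv (fun z => w z t) y) x
      = VID.px (VID.px wq) (x, t) := by
    intro x t
    have h : (fun y => deriv (fun z => w z t) y) = fun y => VID.px wq (y, t) :=
      funext fun y => dW1 y t
    rw [h]
    exact (VID.hasDerivAt_px (VID.contDiff_px hwC) x t).deriv
  -- subtraction identities
  have sub1 : ∀ q : ℝ × ℝ, VID.px wq q = VID.px uq q - VID.px Uq q := VID.px_sub hu hU
  have sub2 : ∀ q : ℝ × ℝ, VID.pt wq q = VID.pt uq q - VID.pt Uq q := VID.pt_sub hu hU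
  have sub3 : ∀ q : ℝ × ℝ, VID.px (VID.px wq) q
      = VID.px (VID.px uq) q - VID.px (VID.px Uq) q := by
    intro q
    have h : VID.px wq = fun p => VID.px uq p - VID.px Uq p := funext (VID.px_sub hu hU)
    rw [h]
    exact VID.px_sub (VID.contDiff_px hu) (VID.contDiff_px hU) q
  have hL₂mem : L₂ ∈ Icc (-L₁) L₂ := ⟨by linarith, le_rfl⟩
  -- PDE for w
  have hPDE : ∀ x ∈ Icc (-L₁) L₂, ∀ t ∈ Icc 0 T,
      VID.pt wq (x, t) - ν * VID.px (VID.px wq) (x, t) + a * VID.px wq (x, t) + c * wq (x, t)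
        = ν * VID.px (VID.px Uq) (x, t) := by
    intro x hx t ht
    have h1 := hequ x hx t ht
    have h2 := heqU x hx t ht
    rw [du1, du2, du3] at h1
    rw [dU1, dU2] at h2
    have e1 := sub1 (x, t)
    have e2 := sub2 (x, t)
    have e3 := sub3 (x, t)
    have r0 : wq (x, t) = u x t - U x t := rfl
    linear_combination h1 - h2 + e2 - ν * e3 + a * e1 + c * r0
  -- boundary condition for w at L₂
  have habsW : ∀ t ∈ Icc 0 T,
      VID.pt wq (L₂, t) + a * VID.px wq (L₂, t) + c * wq (L₂, t) = 0 := by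
    intro t ht
    have h1 := habs t ht
    have h2 := heqU L₂ hL₂mem t ht
    rw [du1, du2] at h1
    rw [dU1, dU2, hfR t ht] at h2
    have e1 := sub1 (L₂, t)
    have e2 := sub2 (L₂, t)
    have r0 : wq (L₂, t) = u L₂ t - U L₂ t := rfl
    linear_combination h1 - h2 + e2 + a * e1 + c * r0
  have hleftW : ∀ t ∈ Icc 0 T, wq (-L₁, t) = 0 := by
    intro t ht
    show u (-L₁) t - U (-L₁) t = 0
    rw [hleft t ht]; ring
  have hinitW : ∀ x ∈ Icc (-L₁) L₂, wq (x, 0) = 0 := by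
    intro x hx
    show u x 0 - U x 0 = 0
    rw [hinit x hx]; ring
  have hww : ∀ x t : ℝ, w x t = wq (x, t) := fun _ _ => rfl
  refine ⟨?_, ?_, ?_, ?_, ?_⟩
  · intro x hx t ht
    rw [dW1, dW2, dW3, dU3, hww]
    exact hPDE x hx t ht
  · intro t ht
    rw [hww]
    exact hleftW t ht
  · intro t ht
    rw [dW1, dW2, hww]
    exact habsW t ht
  · intro x hx
    rw [hww]
    exact hinitW x hx
  -- the energy estimate
  · simp only [dW1, dU3]
    simp only [hww]
    -- energy density and flux
    set Ee : ℝ × ℝ → ℝ := fun q => wq q ^ 2 / 2 with hEed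
    set Ff : ℝ × ℝ → ℝ := fun q => a * (wq q ^ 2 / 2) - ν * (wq q * VID.px wq q) with hFfd
    have hEc : ContDiff ℝ (⊤ : ℕ∞) Ee := (hwC.pow 2).div_const 2
    have hFc : ContDiff ℝ (⊤ : ℕ∞) Ff :=
      (contDiff_const.mul ((hwC.pow 2).div_const 2)).sub
        (contDiff_const.mul (hwC.mul (VID.contDiff_px hwC)))
    have cW : Continuous wq := hwC.continuous
    have cWx : Continuous (VID.px wq) := (VID.contDiff_px hwC).continuous
    have cUxx : Continuous (VID.px (VID.px Uq)) :=
      (VID.contDiff_px (VID.contDiff_px hU)).continuous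
    have cptE : Continuous (VID.pt Ee) := (VID.contDiff_pt hEc).continuous
    have cpxF : Continuous (VID.px Ff) := (VID.contDiff_px hFc).continuous
    -- pointwise formulas for pt Ee and px Ff
    have hptE : ∀ x t : ℝ, VID.pt Ee (x, t) = wq (x, t) * VID.pt wq (x, t) := by
      intro x t
      have h1 := ((VID.hasDerivAt_pt hwC x t).pow 2).div_const 2
      have h2 := VID.hasDerivAt_pt hEc x t
      have h3 := h2.unique h1
      rw [h3]; push_cast; ring
    have hpxF : ∀ x t : ℝ, VID.px Ff (x, t) =
        a * (wq (x, t) * VID.px wq (x, t)) -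
          ν * (VID.px wq (x, t) ^ 2 + wq (x, t) * VID.px (VID.px wq) (x, t)) := by
      intro x t
      have hw1 := VID.hasDerivAt_px hwC x t
      have hw2 := VID.hasDerivAt_px (VID.contDiff_px hwC) x t
      have h1 := (((hw1.pow 2).div_const 2).const_mul a).sub ((hw1.mul hw2).const_mul ν)
      have h2 := VID.hasDerivAt_px hFc x t
      have h3 := h2.unique h1
      rw [h3]; push_cast; ring
    -- the pointwise divergence identity
    have hzero : ∀ x ∈ Icc (-L₁) L₂, ∀ t ∈ Icc 0 T,
        VID.pt Ee (x, t) + VID.px Ff (x, t) +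
          (c * wq (x, t) ^ 2 + ν * VID.px wq (x, t) ^ 2 -
            ν * (VID.px (VID.px Uq) (x, t) * wq (x, t))) = 0 := by
      intro x hx t ht
      rw [hptE, hpxF]
      have h := hPDE x hx t ht
      linear_combination wq (x, t) * h
    -- integrate the divergence identity
    have hJ0 : (∫ t in Ioc 0 T, ∫ x in Ioc (-L₁) L₂,
        (VID.pt Ee (x, t) + VID.px Ff (x, t) +
          (c * wq (x, t) ^ 2 + ν * VID.px wq (x, t) ^ 2 -
            ν * (VID.px (VID.px Uq) (x, t) * wq (x, t))))) = 0 := by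
      have h1 : ∀ t ∈ Ioc (0:ℝ) T, (∫ x in Ioc (-L₁) L₂,
          (VID.pt Ee (x, t) + VID.px Ff (x, t) +
            (c * wq (x, t) ^ 2 + ν * VID.px wq (x, t) ^ 2 -
              ν * (VID.px (VID.px Uq) (x, t) * wq (x, t))))) = 0 := by
        intro t ht
        have h2 : EqOn (fun x => VID.pt Ee (x, t) + VID.px Ff (x, t) +
            (c * wq (x, t) ^ 2 + ν * VID.px wq (x, t) ^ 2 -
              ν * (VID.px (VID.px Uq) (x, t) * wq (x, t)))) (fun _ => (0:ℝ))
            (Ioc (-L₁) L₂) := fun x hx =>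
          hzero x (Ioc_subset_Icc_self hx) t (Ioc_subset_Icc_self ht)
        rw [MeasureTheory.setIntegral_congr_fun measurableSet_Ioc h2]
        simp
      rw [MeasureTheory.setIntegral_congr_fun measurableSet_Ioc
        (fun t ht => h1 t ht : EqOn _ (fun _ => (0:ℝ)) (Ioc 0 T))]
      simp
    -- split the integral
    have hsplit := VID.J_combo (p := VID.pt Ee) (q := VID.px Ff) c ν ν
      (f := fun q => wq q ^ 2) (g := fun q => VID.px wq q ^ 2)
      (h := fun q => VID.px (VID.px Uq) q * wq q)
      cptE cpxF (cW.pow 2) (cWx.pow 2) (cUxx.mul cW) (-L₁) L₂ 0 T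
    rw [hsplit] at hJ0
    -- the time-derivative term
    have hJE : (∫ t in Ioc 0 T, ∫ x in Ioc (-L₁) L₂, VID.pt Ee (x, t))
        = ∫ x in Ioc (-L₁) L₂, Ee (x, T) := by
      rw [VID.J_swap cptE]
      apply MeasureTheory.setIntegral_congr_fun measurableSet_Ioc
      intro x hx
      show (∫ t in Ioc 0 T, VID.pt Ee (x, t)) = Ee (x, T)
      have hftc : (∫ t in Ioc 0 T, VID.pt Ee (x, t)) = Ee (x, T) - Ee (x, 0) :=
        VID.integral_Ioc_deriv (fun t => VID.hasDerivAt_pt hEc x t)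
          (cptE.comp (Continuous.prodMk_right x)) hT.le
      have h0 : Ee (x, 0) = 0 := by
        have h := hinitW x (Ioc_subset_Icc_self hx)
        show wq (x, 0) ^ 2 / 2 = 0
        rw [h]; ring
      rw [hftc, h0]
      ring
    have hJEnn : 0 ≤ ∫ x in Ioc (-L₁) L₂, Ee (x, T) := by
      apply MeasureTheory.setIntegral_nonneg measurableSet_Ioc
      intro x _
      show 0 ≤ wq (x, T) ^ 2 / 2
      positivity
    -- the flux term
    have hFL : EqOn (fun t => Ff (L₂, t))
        (fun t => a / 2 * wq (L₂, t) ^ 2 + ν / a * VID.pt Ee (L₂, t) +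
          ν * c / a * wq (L₂, t) ^ 2) (Ioc 0 T) := by
      intro t ht
      have hb := habsW t (Ioc_subset_Icc_self ht)
      have he := hptE L₂ t
      show a * (wq (L₂, t) ^ 2 / 2) - ν * (wq (L₂, t) * VID.px wq (L₂, t))
        = a / 2 * wq (L₂, t) ^ 2 + ν / a * VID.pt Ee (L₂, t) +
          ν * c / a * wq (L₂, t) ^ 2
      have hpx : VID.px wq (L₂, t) = -(VID.pt wq (L₂, t) + c * wq (L₂, t)) / a := by
        field_simp
        linarith
      rw [hpx, he]
      field_simp
      ring
    have hJF : (∫ t in Ioc 0 T, ∫ x in Ioc (-L₁) L₂, VID.px Ff (x, t))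
        = a / 2 * (∫ t in Ioc 0 T, wq (L₂, t) ^ 2) + ν / a * Ee (L₂, T) +
          ν * c / a * (∫ t in Ioc 0 T, wq (L₂, t) ^ 2) := by
      have h1 : EqOn (fun t => ∫ x in Ioc (-L₁) L₂, VID.px Ff (x, t))
          (fun t => Ff (L₂, t)) (Ioc 0 T) := by
        intro t ht
        have hftc : (∫ x in Ioc (-L₁) L₂, VID.px Ff (x, t)) = Ff (L₂, t) - Ff (-L₁, t) :=
          VID.integral_Ioc_deriv (fun x => VID.hasDerivAt_px hFc x t)
            (cpxF.comp (Continuous.prodMk_left t)) (by linarith)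
        have h0 : Ff (-L₁, t) = 0 := by
          have h := hleftW t (Ioc_subset_Icc_self ht)
          show a * (wq (-L₁, t) ^ 2 / 2) - ν * (wq (-L₁, t) * VID.px wq (-L₁, t)) = 0
          rw [h]; ring
        show (∫ x in Ioc (-L₁) L₂, VID.px Ff (x, t)) = Ff (L₂, t)
        rw [hftc, h0]; ring
      rw [MeasureTheory.setIntegral_congr_fun measurableSet_Ioc h1,
        MeasureTheory.setIntegral_congr_fun measurableSet_Ioc hFL]
      have cwL : Continuous fun t => wq (L₂, t) ^ 2 :=
        ((cW.comp (Continuous.prodMk_right L₂)).pow 2)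
      have cptEL : Continuous fun t => VID.pt Ee (L₂, t) :=
        cptE.comp (Continuous.prodMk_right L₂)
      have i1 : IntegrableOn (fun t => a / 2 * wq (L₂, t) ^ 2) (Ioc 0 T) volume :=
        (continuous_const.mul cwL).integrableOn_Ioc
      have i2 : IntegrableOn (fun t => ν / a * VID.pt Ee (L₂, t)) (Ioc 0 T) volume :=
        (continuous_const.mul cptEL).integrableOn_Ioc
      have i3 : IntegrableOn (fun t => ν * c / a * wq (L₂, t) ^ 2) (Ioc 0 T) volume :=
        (continuous_const.mul cwL).integrableOn_Ioc
      have i12 : IntegrableOn (fun t => a / 2 * wq (L₂, t) ^ 2 +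
          ν / a * VID.pt Ee (L₂, t)) (Ioc 0 T) volume := i1.add i2
      rw [MeasureTheory.integral_add i12 i3, MeasureTheory.integral_add i1 i2,
        MeasureTheory.integral_const_mul, MeasureTheory.integral_const_mul,
        MeasureTheory.integral_const_mul]
      have hftcE : (∫ t in Ioc 0 T, VID.pt Ee (L₂, t)) = Ee (L₂, T) := by
        have h := VID.integral_Ioc_deriv (fun t => VID.hasDerivAt_pt hEc L₂ t) cptEL hT.le
        have h0 : Ee (L₂, 0) = 0 := by
          have h' := hinitW L₂ hL₂mem
          show wq (L₂, 0) ^ 2 / 2 = 0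
          rw [h']; ring
        rw [h, h0]; ring
      rw [hftcE]
    -- positivity facts
    have hK : 0 ≤ ∫ t in Ioc 0 T, wq (L₂, t) ^ 2 :=
      MeasureTheory.setIntegral_nonneg measurableSet_Ioc fun t _ => sq_nonneg _
    have hEL : 0 ≤ Ee (L₂, T) := by
      show 0 ≤ wq (L₂, T) ^ 2 / 2
      positivity
    -- Cauchy-Schwarz step
    have hCSpt : ∀ q : ℝ × ℝ, 0 ≤ c * wq q ^ 2 + ν ^ 2 / c * VID.px (VID.px Uq) q ^ 2 -
        2 * ν * (VID.px (VID.px Uq) q * wq q) := by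
      intro q
      have hkey : c * wq q ^ 2 + ν ^ 2 / c * VID.px (VID.px Uq) q ^ 2 -
          2 * ν * (VID.px (VID.px Uq) q * wq q)
          = (c * wq q - ν * VID.px (VID.px Uq) q) ^ 2 / c := by
        field_simp
        ring
      rw [hkey]
      positivity
    have hCS0 : 0 ≤ ∫ t in Ioc 0 T, ∫ x in Ioc (-L₁) L₂,
        (c * wq (x, t) ^ 2 + ν ^ 2 / c * VID.px (VID.px Uq) (x, t) ^ 2 -
          2 * ν * (VID.px (VID.px Uq) (x, t) * wq (x, t))) :=
      VID.J_nonneg (fun q => hCSpt q) (-L₁) L₂ 0 T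
    have hCSsplit := VID.J_combo2 c (ν ^ 2 / c) (2 * ν)
      (f := fun q => wq q ^ 2) (g := fun q => VID.px (VID.px Uq) q ^ 2)
      (h := fun q => VID.px (VID.px Uq) q * wq q)
      (cW.pow 2) (cUxx.pow 2) (cUxx.mul cW) (-L₁) L₂ 0 T
    rw [hCSsplit] at hCS0
    -- conclude
    rw [hJE, hJF] at hJ0
    have hνa : 0 ≤ ν / a * Ee (L₂, T) := by positivity
    have hνca : 0 ≤ ν * c / a * ∫ t in Ioc 0 T, wq (L₂, t) ^ 2 := by positivity
    linarith
end
end
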